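/- arXiv:2303.08468 — 5 statements merged into one kernel-verified Lean document; each statement's English description precedes it below -/
import Mathlib

section
/- Let n = p_1^{m_1} p_2^{m_2} ⋯ p_k^{m_k} where p_1 < p_2 < ⋯ < p_k are distinct primes and each m_i is a positive integer. A nonzero ideal I = ⟨p_1^{r_1} p_2^{r_2} ⋯ p_k^{r_k}⟩ of Z_n (where 0 ≤ r_i ≤ m_i for each i) is an essential ideal of Z_n if and only if r_i ≠ m_i for every i with 1 ≤ i ≤ k. -/
open Polynomial

/-- An ideal `I` of a commutative ring is *essential* if it has nonzero intersection
with every nonzero ideal. -/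
def IsEssentialIdeal {R : Type*} [CommRing R] (I : Ideal R) : Prop :=
  ∀ J : Ideal R, J ≠ ⊥ → I ⊓ J ≠ ⊥

/-- The essential ideal graph of a commutative ring `R`: its vertices are the nonzero
proper ideals of `R`, and two distinct vertices `I`, `K` are adjacent iff `I + K` is an
essential ideal of `R`. -/
def essentialIdealGraph (R : Type*) [CommRing R] :
    SimpleGraph {I : Ideal R // I ≠ ⊥ ∧ I ≠ ⊤} where
  Adj I K := I ≠ K ∧ IsEssentialIdeal (I.1 ⊔ K.1)
  symm := by
    constructor
    rintro I K ⟨hne, hess⟩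
    exact ⟨hne.symm, by rwa [sup_comm]⟩
  loopless := ⟨fun I h => h.1 rfl⟩

/-- The vertex set of the essential ideal graph of `ZMod n`. -/
abbrev EssVert (n : ℕ) : Type := {I : Ideal (ZMod n) // I ≠ ⊥ ∧ I ≠ ⊤}


lemma cast_dvd_iff_aux (n : ℕ) [NeZero n] (a b : ℕ) :
    (a : ZMod n) ∣ (b : ZMod n) ↔ Nat.gcd a n ∣ b := by
  constructor
  · rintro ⟨c, hc⟩
    have hc' : c = ((c.val : ℕ) : ZMod n) := by simp [ZMod.natCast_val, ZMod.cast_id]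
    rw [hc'] at hc
    have hb : (b : ZMod n) = ((a * c.val : ℕ) : ZMod n) := by push_cast; exact hc
    have hmod : b ≡ a * c.val [MOD n] := (ZMod.natCast_eq_natCast_iff _ _ _).1 hb
    have h3 : (n : ℤ) ∣ (a * c.val : ℕ) - (b : ℕ) := (Nat.modEq_iff_dvd).1 hmod
    have h1 : ((Nat.gcd a n : ℕ) : ℤ) ∣ (a : ℤ) := Int.natCast_dvd_natCast.2 (Nat.gcd_dvd_left a n)
    have h2 : ((Nat.gcd a n : ℕ) : ℤ) ∣ (n : ℤ) := Int.natCast_dvd_natCast.2 (Nat.gcd_dvd_right a n)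
    have h4 : ((Nat.gcd a n : ℕ) : ℤ) ∣ (b : ℤ) := by
      have := (h1.mul_right (c.val : ℤ)).sub (h2.trans h3)
      push_cast at this ⊢
      simpa using this
    exact_mod_cast h4
  · rintro ⟨t, rfl⟩
    have hg : ((Nat.gcd a n : ℕ) : ZMod n) = (a : ZMod n) * ((Nat.gcdA a n : ℤ) : ZMod n) := by
      have hb := Nat.gcd_eq_gcd_ab a n
      have : (((Nat.gcd a n : ℕ) : ℤ) : ZMod n)
          = (((a : ℤ) * Nat.gcdA a n + (n : ℤ) * Nat.gcdB a n : ℤ) : ZMod n) := by rw [← hb]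
      push_cast at this
      simpa [ZMod.natCast_self] using this
    exact ⟨((Nat.gcdA a n : ℤ) : ZMod n) * (t : ZMod n), by rw [Nat.cast_mul, hg]; ring⟩

lemma mem_span_cast_iff_aux (n : ℕ) [NeZero n] (a : ℕ) (ha : a ∣ n) (c : ZMod n) :
    c ∈ Ideal.span {(a : ZMod n)} ↔ a ∣ c.val := by
  have key : ((a : ZMod n) ∣ ((c.val : ℕ) : ZMod n)) ↔ Nat.gcd a n ∣ c.val :=
    cast_dvd_iff_aux n a c.val
  rw [ZMod.natCast_val, ZMod.cast_id] at key
  rw [Ideal.mem_span_singleton, key, Nat.gcd_eq_left ha]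

lemma factorization_prod_pow_aux {k : ℕ} (p : Fin k → ℕ) (hp : ∀ i, (p i).Prime)
    (hinj : Function.Injective p) (r : Fin k → ℕ) (i : Fin k) :
    (∏ j, p j ^ r j).factorization (p i) = r i := by
  rw [Nat.factorization_prod (fun j _ => pow_ne_zero _ (hp j).pos.ne'),
    Finsupp.finset_sum_apply, Finset.sum_eq_single i]
  · rw [Nat.Prime.factorization_pow (hp i), Finsupp.single_apply, if_pos rfl]
  · intro j _ hj
    rw [Nat.Prime.factorization_pow (hp j), Finsupp.single_apply,
      if_neg (fun h => hj (hinj h))]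
  · simp

lemma prod_pow_dvd_aux {k : ℕ} (p : Fin k → ℕ) (hp : ∀ i, (p i).Prime)
    (hinj : Function.Injective p) (m : Fin k → ℕ) (d : ℕ) (hd : d ≠ 0)
    (h : ∀ i, p i ^ m i ∣ d) : (∏ i, p i ^ m i) ∣ d := by
  have hn : (∏ i, p i ^ m i) ≠ 0 :=
    Finset.prod_ne_zero_iff.2 fun j _ => pow_ne_zero _ (hp j).pos.ne'
  rw [← Nat.factorization_le_iff_dvd hn hd, Finsupp.le_def]
  intro q
  rw [Nat.factorization_prod (fun j _ => pow_ne_zero _ (hp j).pos.ne'),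
    Finsupp.finset_sum_apply]
  by_cases hq : ∃ i, p i = q
  · obtain ⟨i, rfl⟩ := hq
    calc (∑ j, ((p j ^ m j).factorization) (p i))
        = ∑ j, ((p j ^ m j).factorization) (p i) := rfl
      _ ≤ (d.factorization) (p i) := by
          rw [Finset.sum_eq_single i]
          · rw [Nat.Prime.factorization_pow (hp i), Finsupp.single_apply, if_pos rfl]
            exact (Nat.Prime.pow_dvd_iff_le_factorization (hp i) hd).1 (h i)
          · intro j _ hj
            rw [Nat.Prime.factorization_pow (hp j), Finsupp.single_apply]
            rw [if_neg (fun e => hj (hinj e))]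
          · simp
  · rw [Finset.sum_eq_zero]
    · exact Nat.zero_le _
    intro j _
    rw [Nat.Prime.factorization_pow (hp j), Finsupp.single_apply, if_neg (fun e => hq ⟨j, e⟩)]

/-- Let `n = p 0 ^ m 0 * ⋯ * p (k-1) ^ m (k-1)` where the `p i` are distinct primes
(listed in increasing order) and the `m i` are positive integers.  A nonzero ideal
`I = ⟨p 0 ^ r 0 * ⋯ * p (k-1) ^ r (k-1)⟩` of `ZMod n` (with `0 ≤ r i ≤ m i`) is an
essential ideal if and only if `r i ≠ m i` for every `i`. -/
theorem essential_iff_ne_exponents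
    (k : ℕ) (hk : 0 < k) (p : Fin k → ℕ) (hp : ∀ i, (p i).Prime)
    (hmono : StrictMono p) (m : Fin k → ℕ) (hm : ∀ i, 0 < m i)
    (n : ℕ) (hn : n = ∏ i, p i ^ m i)
    (r : Fin k → ℕ) (hr : ∀ i, r i ≤ m i)
    (I : Ideal (ZMod n)) (hI : I = Ideal.span {((∏ i, p i ^ r i : ℕ) : ZMod n)})
    (hI0 : I ≠ ⊥) :
    IsEssentialIdeal I ↔ ∀ i, r i ≠ m i := by
  have hinj : Function.Injective p := hmono.injective
  set a : ℕ := ∏ i, p i ^ r i with ha_def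
  have ha0 : a ≠ 0 := Finset.prod_ne_zero_iff.2 fun j _ => pow_ne_zero _ (hp j).pos.ne'
  have hn0 : n ≠ 0 := by
    rw [hn]; exact Finset.prod_ne_zero_iff.2 fun j _ => pow_ne_zero _ (hp j).pos.ne'
  haveI : NeZero n := ⟨hn0⟩
  have han : a ∣ n := by
    rw [hn]; exact Finset.prod_dvd_prod_of_dvd _ _ fun i _ => pow_dvd_pow _ (hr i)
  constructor
  · -- essential → all exponents differ
    intro hess i hri
    set b : ℕ := ∏ j ∈ Finset.univ.erase i, p j ^ m j with hb_def
    have hb : b * p i ^ m i = n := by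
      rw [hn, hb_def, Finset.prod_erase_mul _ _ (Finset.mem_univ i)]
    have hb0 : b ≠ 0 := Finset.prod_ne_zero_iff.2 fun j _ => pow_ne_zero _ (hp j).pos.ne'
    have hbn : b ∣ n := ⟨p i ^ m i, hb.symm⟩
    have hblt : b < n := by
      rw [← hb]
      have h2 : 2 ≤ p i ^ m i := by
        calc 2 ≤ p i := (hp i).two_le
        _ ≤ p i ^ m i := Nat.le_self_pow (hm i).ne' _
      exact (Nat.lt_mul_iff_one_lt_right (Nat.pos_of_ne_zero hb0)).2 (by omega)
    have hbcast : (b : ZMod n) ≠ 0 := by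
      rw [Ne, ZMod.natCast_eq_zero_iff]
      intro hcon
      exact absurd (Nat.le_of_dvd (Nat.pos_of_ne_zero hb0) hcon) (not_le.2 hblt)
    have hJ : Ideal.span {(b : ZMod n)} ≠ ⊥ := by
      rw [Ne, Ideal.span_singleton_eq_bot]; exact hbcast
    refine hess _ hJ ?_
    rw [eq_bot_iff]
    rintro c ⟨hcI, hcJ⟩
    have hca : a ∣ c.val := (mem_span_cast_iff_aux n a han c).1 (hI ▸ hcI)
    have hcb : b ∣ c.val := (mem_span_cast_iff_aux n b hbn c).1 hcJ
    have hpia : p i ^ m i ∣ a := by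
      rw [← hri]; exact Finset.dvd_prod_of_mem _ (Finset.mem_univ i)
    have hcop : Nat.Coprime b (p i ^ m i) := by
      apply Nat.Coprime.pow_right
      apply Nat.Coprime.prod_left
      intro j hj
      exact Nat.Coprime.pow_left _
        ((Nat.coprime_primes (hp j) (hp i)).2 (hinj.ne (Finset.ne_of_mem_erase hj)))
    have hnc : n ∣ c.val := by
      have h := Nat.Coprime.mul_dvd_of_dvd_of_dvd hcop hcb (hpia.trans hca)
      rwa [hb] at h
    exact (Submodule.mem_bot _).2
      ((ZMod.val_eq_zero c).1 (Nat.eq_zero_of_dvd_of_lt hnc (ZMod.val_lt c)))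
  · -- all exponents differ → essential
    intro hess J hJ heq
    obtain ⟨x, hxJ, hx0⟩ := (Submodule.ne_bot_iff J).1 hJ
    set d : ℕ := Nat.gcd x.val n with hd_def
    have hxval0 : x.val ≠ 0 := fun h => hx0 ((ZMod.val_eq_zero x).1 h)
    have hd0 : d ≠ 0 := fun h => hn0 (Nat.eq_zero_of_gcd_eq_zero_right h)
    have hdn : d ∣ n := Nat.gcd_dvd_right _ _
    have hdne : d ≠ n := by
      intro h
      have hnx : d ∣ x.val := Nat.gcd_dvd_left _ _
      rw [h] at hnx
      exact hxval0 (Nat.eq_zero_of_dvd_of_lt hnx (ZMod.val_lt x))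
    set L : ℕ := Nat.lcm a d with hL_def
    have hL0 : L ≠ 0 := Nat.lcm_ne_zero ha0 hd0
    have hyI : ((L : ZMod n)) ∈ I := by
      rw [hI, Ideal.mem_span_singleton]
      exact Nat.cast_dvd_cast (Nat.dvd_lcm_left a d)
    have hyJ : ((L : ZMod n)) ∈ J := by
      have hxd : (x : ZMod n) ∣ (L : ZMod n) := by
        have hx : x = ((x.val : ℕ) : ZMod n) := by simp [ZMod.natCast_val, ZMod.cast_id]
        rw [hx]
        exact (cast_dvd_iff_aux n x.val L).2 (Nat.dvd_lcm_right a d)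
      obtain ⟨z, hz⟩ := hxd
      rw [hz]
      exact Ideal.mul_mem_right _ J hxJ
    have hy0 : ((L : ZMod n)) ≠ 0 := by
      rw [Ne, ZMod.natCast_eq_zero_iff]
      intro hnl
      have hdvd : ∀ i, p i ^ m i ∣ d := by
        intro i
        have h1 : p i ^ m i ∣ L := (hn ▸ Finset.dvd_prod_of_mem (fun j => p j ^ m j)
          (Finset.mem_univ i) : p i ^ m i ∣ n).trans hnl
        have h2 : m i ≤ L.factorization (p i) :=
          (Nat.Prime.pow_dvd_iff_le_factorization (hp i) hL0).1 h1
        rw [hL_def, Nat.factorization_lcm ha0 hd0, Finsupp.sup_apply,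
          ha_def, factorization_prod_pow_aux p hp hinj r i] at h2
        have hlt : r i < m i := lt_of_le_of_ne (hr i) (hess i)
        have h3 : m i ≤ d.factorization (p i) := by
          rcases le_total (r i) (d.factorization (p i)) with h | h
          · simpa [max_eq_right h] using h2
          · simp [max_eq_left h] at h2; omega
        exact (Nat.Prime.pow_dvd_iff_le_factorization (hp i) hd0).2 h3
      have : n ∣ d := hn ▸ prod_pow_dvd_aux p hp hinj m d hd0 hdvd
      exact hdne (Nat.dvd_antisymm hdn this)
    refine hy0 ?_
    have : ((L : ZMod n)) ∈ I ⊓ J := ⟨hyI, hyJ⟩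
    rwa [heq, Ideal.mem_bot] at this
end

section
/- Let n = p^m where p is a prime and m > 2 is a positive integer. Then the energy of the essential ideal graph E_{Z_n} equals 2m - 4. -/
open Polynomial

noncomputable instance (n : ℕ) [NeZero n] : Fintype (EssVert n) := by
  have : Finite (Ideal (ZMod n)) :=
    Finite.of_injective (fun I => (I : Set (ZMod n))) SetLike.coe_injective
  exact Fintype.ofFinite _

noncomputable instance (n : ℕ) : DecidableEq (EssVert n) := Classical.decEq _

open Classical in
/-- The adjacency matrix (with real entries) of the essential ideal graph of `ZMod n`. -/
noncomputable def essAdjMatrix (n : ℕ) [NeZero n] :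
    Matrix (EssVert n) (EssVert n) ℝ :=
  Matrix.of fun I K => if (essentialIdealGraph (ZMod n)).Adj I K then 1 else 0

/-- The energy of the essential ideal graph of `ZMod n`: the sum of the absolute values
of the eigenvalues (roots of the characteristic polynomial, with multiplicity) of its
adjacency matrix. -/
noncomputable def essEnergy (n : ℕ) [NeZero n] : ℝ :=
  ((essAdjMatrix n).charpoly.roots.map (fun x => |x|)).sum

open Matrix in
lemma charpoly_complete {α : Type*} [Fintype α] [DecidableEq α] {N : ℕ}
    (hN : Fintype.card α = N) (h1 : 1 ≤ N) :
    (Matrix.of fun i j : α => if i = j then (0:ℝ) else 1).charpoly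
      = (X - C ((N:ℝ) - 1)) * (X + C 1) ^ (N - 1) := by
  set A : Matrix α α ℝ := Matrix.of fun i j : α => if i = j then (0:ℝ) else 1 with hA
  -- charmatrix A = (X+1) • 1 - (all ones)
  have hcm : charmatrix A = ((X + C 1 : ℝ[X]) • (1 : Matrix α α ℝ[X]))
      - Matrix.of (fun _ _ : α => (1 : ℝ[X])) := by
    ext i j
    by_cases h : i = j
    · subst h
      simp [charmatrix_apply_eq, hA, Matrix.smul_apply, Matrix.one_apply_eq, smul_eq_mul]
    · simp [charmatrix_apply_ne _ _ _ h, hA, h, Matrix.one_apply_ne h, Matrix.smul_apply, smul_eq_mul]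
  set K := FractionRing ℝ[X]
  have hinj : Function.Injective (algebraMap ℝ[X] K) := IsFractionRing.injective _ _
  apply hinj
  set f := algebraMap ℝ[X] K
  have hne : (X + C 1 : ℝ[X]) ≠ 0 := Polynomial.X_add_C_ne_zero 1
  have ht : f (X + C 1) ≠ 0 := fun h => hne (hinj (by simpa using h))
  set t := f (X + C 1) with htdef
  have key : f A.charpoly = t ^ (N - 1) * (t - (N:K)) := by
    rw [Matrix.charpoly, hcm, RingHom.map_det, RingHom.mapMatrix_apply]
    have hmap : (((X + C 1 : ℝ[X]) • (1 : Matrix α α ℝ[X]))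
        - Matrix.of (fun _ _ : α => (1 : ℝ[X]))).map f
        = t • ((1 : Matrix α α K) + Matrix.replicateCol Unit (fun _ : α => -t⁻¹) * Matrix.replicateRow Unit (fun _ : α => (1:K))) := by
      have hcr : ∀ i j : α, ((Matrix.replicateCol Unit (fun _ : α => -t⁻¹) *
          Matrix.replicateRow Unit (fun _ : α => (1:K))) i j) = -t⁻¹ := by
        intro i j
        simp [Matrix.mul_apply]
      ext i j
      by_cases h : i = j
      · subst h
        simp only [Matrix.map_apply, Matrix.sub_apply, Matrix.smul_apply, Matrix.one_apply_eq,
          Matrix.of_apply, smul_eq_mul, _root_.map_one, map_sub, mul_one, Matrix.add_apply,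
          mul_add]
        rw [hcr i i, mul_neg, mul_inv_cancel₀ ht, htdef, Polynomial.C_1]
        ring
      · simp only [Matrix.map_apply, Matrix.sub_apply, Matrix.smul_apply, Matrix.one_apply_ne h,
          Matrix.of_apply, smul_eq_mul, _root_.map_one, map_sub, mul_zero, Matrix.add_apply,
          mul_add, map_neg, map_zero]
        rw [hcr i j, mul_neg, mul_inv_cancel₀ ht]
        ring
    rw [hmap, Matrix.det_smul, Matrix.det_one_add_replicateCol_mul_replicateRow, hN]
    simp only [dotProduct, Finset.sum_const, Finset.card_univ, hN, nsmul_eq_mul, mul_neg,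
      mul_one]
    have hNN : N - 1 + 1 = N := by omega
    rw [← hNN, pow_succ]
    rw [Nat.add_sub_cancel]
    linear_combination (-(t ^ (N - 1) * ((N - 1 + 1 : ℕ) : K))) * mul_inv_cancel₀ ht
  rw [key]
  have hC : (C ((N:ℝ) - 1) : ℝ[X]) = (N : ℝ[X]) - 1 := by
    rw [_root_.map_sub, _root_.map_one]; simp
  have hC2 : (X - C ((N:ℝ) - 1)) = (X + C 1) - (N : ℝ[X]) := by rw [hC, Polynomial.C_1]; ring
  rw [hC2, _root_.map_mul, _root_.map_sub, _root_.map_pow, map_natCast, ← htdef]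
  ring

section Ideals
variable {p m n : ℕ}

/-- f : ℤ → ZMod n -/
private noncomputable abbrev φ (n : ℕ) : ℤ →+* ZMod n := Int.castRingHom (ZMod n)

lemma phi_surj (n : ℕ) : Function.Surjective (φ n) := ZMod.intCast_surjective

lemma comap_inj (n : ℕ) : Function.Injective (Ideal.comap (φ n)) :=
  Ideal.comap_injective_of_surjective _ (phi_surj n)

lemma comap_span_pow (hp : p.Prime) (hn : n = p ^ m) [NeZero n] {k : ℕ} (hk : k ≤ m) :
    Ideal.comap (φ n) (Ideal.span {((p : ZMod n)) ^ k}) = Ideal.span {((p : ℤ)) ^ k} := by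
  ext x
  simp only [Ideal.mem_comap, Ideal.mem_span_singleton]
  constructor
  · rintro ⟨c, hc⟩
    have h1 : (((x - p ^ k * (ZMod.cast c : ℤ) : ℤ)) : ZMod n) = 0 := by
      push_cast
      rw [show ((x : ℤ) : ZMod n) = (p : ZMod n) ^ k * c from hc]
      ring
    rw [ZMod.intCast_zmod_eq_zero_iff_dvd] at h1
    have h2 : ((p : ℤ)) ^ k ∣ (n : ℤ) := by
      rw [hn]; push_cast; exact pow_dvd_pow _ hk
    have h3 : ((p : ℤ)) ^ k ∣ x - p ^ k * (ZMod.cast c : ℤ) := h2.trans h1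
    have := dvd_add h3 (Dvd.intro (ZMod.cast c : ℤ) rfl)
    simpa using this
  · rintro ⟨c, rfl⟩
    exact ⟨(c : ZMod n), by simp only [Int.coe_castRingHom, map_mul, map_pow]; push_cast; ring⟩

lemma classify (hp : p.Prime) (hn : n = p ^ m) [NeZero n] (I : Ideal (ZMod n)) :
    ∃ k ≤ m, I = Ideal.span {((p : ZMod n)) ^ k} := by
  obtain ⟨a, ha⟩ := (IsPrincipalIdealRing.principal (Ideal.comap (φ n) I)).principal
  have hnI : Ideal.span {(n : ℤ)} ≤ Ideal.comap (φ n) I := by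
    rw [Ideal.span_le]
    intro y hy
    simp only [Set.mem_singleton_iff] at hy
    subst hy
    simp only [Ideal.mem_comap, SetLike.mem_coe]
    have : (φ n) (n : ℤ) = 0 := by simp [ZMod.natCast_self]
    rw [this]; exact I.zero_mem
  rw [ha] at hnI
  rw [Ideal.submodule_span_eq, Ideal.span_singleton_le_span_singleton] at hnI
  have hdvd : a.natAbs ∣ p ^ m := by
    have h4 := Int.natAbs_dvd_natAbs.mpr hnI
    rwa [Int.natAbs_natCast, hn] at h4
  obtain ⟨k, hk, hak⟩ := (Nat.dvd_prime_pow hp).mp hdvd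
  refine ⟨k, hk, ?_⟩
  apply comap_inj n
  rw [comap_span_pow hp hn hk, ha, Ideal.submodule_span_eq, ← Int.span_natAbs, hak]
  push_cast
  rfl

lemma span_pow_m (hp : p.Prime) (hn : n = p ^ m) [NeZero n] :
    Ideal.span {((p : ZMod n)) ^ m} = ⊥ := by
  have : ((p : ZMod n)) ^ m = 0 := by
    have : (((p ^ m : ℕ)) : ZMod n) = 0 := by rw [← hn]; exact ZMod.natCast_self n
    push_cast at this
    exact this
  rw [this, Ideal.span_singleton_eq_bot.mpr rfl]

lemma span_pow_ne_bot (hp : p.Prime) (hn : n = p ^ m) [NeZero n] {k : ℕ} (hk : k < m) :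
    Ideal.span {((p : ZMod n)) ^ k} ≠ ⊥ := by
  rw [Ne, Ideal.span_singleton_eq_bot]
  intro h
  have h0 : (((p ^ k : ℤ)) : ZMod n) = 0 := by push_cast; exact_mod_cast h
  rw [ZMod.intCast_zmod_eq_zero_iff_dvd] at h0
  have hppos : (0:ℤ) < (p:ℤ) := by exact_mod_cast hp.pos
  have : (n : ℤ) ≤ p ^ k := Int.le_of_dvd (pow_pos hppos k) h0
  have h2 : (p:ℤ) ^ m ≤ (p:ℤ) ^ k := by rw [hn] at this; push_cast at this; linarith
  have := pow_le_pow_iff_right₀ (by exact_mod_cast hp.one_lt : (1:ℤ) < p) |>.mp h2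
  omega

lemma span_pow_ne_top (hp : p.Prime) (hn : n = p ^ m) [NeZero n] {k : ℕ} (hk : 1 ≤ k)
    (hk2 : k ≤ m) : Ideal.span {((p : ZMod n)) ^ k} ≠ ⊤ := by
  intro h
  have := congrArg (Ideal.comap (φ n)) h
  rw [comap_span_pow hp hn hk2, Ideal.comap_top, Ideal.span_singleton_eq_top] at this
  have hpu : ¬ IsUnit ((p : ℤ)) := (Nat.prime_iff_prime_int.mp hp).not_unit
  exact hpu ((isUnit_pow_iff (by omega : k ≠ 0)).mp this)

lemma span_pow_inj (hp : p.Prime) (hn : n = p ^ m) [NeZero n] {i j : ℕ} (hi : i ≤ m)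
    (hj : j ≤ m) (h : Ideal.span {((p : ZMod n)) ^ i} = Ideal.span {((p : ZMod n)) ^ j}) :
    i = j := by
  have := congrArg (Ideal.comap (φ n)) h
  rw [comap_span_pow hp hn hi, comap_span_pow hp hn hj,
    Ideal.span_singleton_eq_span_singleton] at this
  rw [Int.associated_iff_natAbs] at this
  simp only [Int.natAbs_pow, Int.natAbs_natCast] at this
  exact Nat.pow_right_injective hp.two_le this

lemma essential_of_ne_bot (hp : p.Prime) (hn : n = p ^ m) [NeZero n] {I : Ideal (ZMod n)}
    (hI : I ≠ ⊥) : ∀ J : Ideal (ZMod n), J ≠ ⊥ → I ⊓ J ≠ ⊥ := by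
  intro J hJ
  obtain ⟨i, hi, rfl⟩ := classify hp hn I
  obtain ⟨j, hj, rfl⟩ := classify hp hn J
  rcases le_total i j with h | h
  · have : Ideal.span {((p : ZMod n)) ^ j} ≤ Ideal.span {((p : ZMod n)) ^ i} :=
      Ideal.span_singleton_le_span_singleton.mpr (pow_dvd_pow _ h)
    rw [inf_eq_right.mpr this]
    exact hJ
  · have : Ideal.span {((p : ZMod n)) ^ i} ≤ Ideal.span {((p : ZMod n)) ^ j} :=
      Ideal.span_singleton_le_span_singleton.mpr (pow_dvd_pow _ h)
    rw [inf_eq_left.mpr this]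
    exact hI

end Ideals

section Assembly
variable {p m n : ℕ}

lemma card_essVert (hp : p.Prime) (hm : 2 < m) (hn : n = p ^ m) [NeZero n] :
    Fintype.card (EssVert n) = m - 1 := by
  have hbij : Function.Bijective (fun k : Fin (m - 1) =>
      (⟨Ideal.span {((p : ZMod n)) ^ (k.1 + 1)},
        span_pow_ne_bot hp hn (by omega),
        span_pow_ne_top hp hn (by omega) (by omega)⟩ : EssVert n)) := by
    constructor
    · intro k1 k2 h
      have := congrArg Subtype.val h
      simp only at this
      have := span_pow_inj hp hn (by omega) (by omega) this
      exact Fin.ext (by omega)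
    · rintro ⟨I, hb, ht⟩
      obtain ⟨k, hk, rfl⟩ := classify hp hn I
      have hk0 : k ≠ 0 := by
        rintro rfl
        exact ht (by simp [Ideal.span_singleton_one])
      have hkm : k ≠ m := by
        rintro rfl
        exact hb (span_pow_m hp hn)
      refine ⟨⟨k - 1, by omega⟩, ?_⟩
      apply Subtype.ext
      simp only
      have hkk : k - 1 + 1 = k := by omega
      rw [hkk]
  rw [← Fintype.card_of_bijective hbij, Fintype.card_fin]

lemma essAdjMatrix_eq (hp : p.Prime) (hn : n = p ^ m) [NeZero n] :
    essAdjMatrix n = Matrix.of fun I K : EssVert n => if I = K then (0:ℝ) else 1 := by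
  funext I K
  simp only [essAdjMatrix, Matrix.of_apply]
  by_cases h : I = K
  · subst h
    rw [if_neg (SimpleGraph.irrefl _), if_pos rfl]
  · rw [if_neg h, if_pos]
    refine (⟨h, ?_⟩ : I ≠ K ∧ IsEssentialIdeal (I.1 ⊔ K.1))
    intro J hJ
    refine essential_of_ne_bot hp hn ?_ J hJ
    intro hsup
    rw [sup_eq_bot_iff] at hsup
    exact I.2.1 hsup.1

end Assembly

/-- For `n = p ^ m` with `p` prime and `m > 2`, the energy of the essential ideal graph
of `ZMod n` equals `2 * m - 4`. -/
theorem energy_essentialIdealGraph_primePow (p m n : ℕ) (hp : p.Prime) (hm : 2 < m)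
    (hn : n = p ^ m) [NeZero n] :
    essEnergy n = 2 * (m : ℝ) - 4 := by
  have hm1 : 1 ≤ m - 1 := by omega
  rw [essEnergy, essAdjMatrix_eq hp hn,
    charpoly_complete (card_essVert hp hm hn) hm1]
  set N := m - 1 with hN
  have hX1 : (X + C (1:ℝ)) = X - C (-1) := by rw [map_neg, sub_neg_eq_add]
  have hmon : (X - C ((N:ℝ) - 1)) * (X + C 1) ^ (N - 1) ≠ 0 := by
    rw [hX1]
    exact ((monic_X_sub_C _).mul ((monic_X_sub_C _).pow _)).ne_zero
  rw [Polynomial.roots_mul hmon, hX1, Polynomial.roots_pow, Polynomial.roots_X_sub_C,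
    Polynomial.roots_X_sub_C]
  rw [Multiset.nsmul_singleton, Multiset.map_add, Multiset.map_singleton,
    Multiset.map_replicate, Multiset.sum_add, Multiset.sum_singleton,
    Multiset.sum_replicate]
  have habs : |(N:ℝ) - 1| = (N:ℝ) - 1 := by
    rw [abs_of_nonneg]
    have : (1:ℝ) ≤ (N:ℝ) := by exact_mod_cast hm1
    linarith
  have hcast1 : ((N:ℕ):ℝ) = (m:ℝ) - 1 := by
    rw [hN, Nat.cast_sub (by omega)]
    norm_num
  have hcast2 : ((N - 1 : ℕ):ℝ) = (m:ℝ) - 2 := by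
    rw [Nat.cast_sub hm1, hcast1]
    ring
  rw [habs, abs_neg, abs_one, nsmul_eq_mul, hcast1, hcast2]
  ring
end

section
/- Let n = p^m q^m, where p and q are distinct primes and m > 1. Then the energy of the essential ideal graph E_{Z_n} equals k + √(k² + 4m³), where k = m² + m - 2. -/
open Polynomial

section ZModIdeals

variable {n : ℕ} [NeZero n]

/-- Every ideal of `ZMod n` is generated by a divisor of `n`. -/
lemma ZModIdeal.exists_gen (I : Ideal (ZMod n)) :
    ∃ d : ℕ, d ∣ n ∧ I = Ideal.span {(d : ZMod n)} := by
  let f : ℤ →+* ZMod n := Int.castRingHom (ZMod n)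
  have hf : Function.Surjective f := ZMod.intCast_surjective
  set J := I.comap f with hJ
  have hgen : Ideal.span {Submodule.IsPrincipal.generator J} = J :=
    Ideal.span_singleton_generator J
  set g := Submodule.IsPrincipal.generator J with hg
  refine ⟨g.natAbs, ?_, ?_⟩
  · have hnJ : (n : ℤ) ∈ J := by
      simp [hJ, Ideal.mem_comap, f]
    rw [← hgen, ← Int.span_natAbs, Ideal.mem_span_singleton] at hnJ
    exact_mod_cast hnJ
  · have : I = Ideal.map f J := (Ideal.map_comap_of_surjective f hf I).symm
    rw [this, ← hgen, ← Int.span_natAbs, Ideal.map_span]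
    simp only [Set.image_singleton, map_natCast]

lemma ZModIdeal.span_le_span {d e : ℕ} (he : e ∣ n) :
    Ideal.span {(d : ZMod n)} ≤ Ideal.span {(e : ZMod n)} ↔ e ∣ d := by
  rw [Ideal.span_singleton_le_span_singleton]
  constructor
  · rintro ⟨x, hx⟩
    have hx' : (d : ZMod n) = ((e * x.val : ℕ) : ZMod n) := by
      push_cast [ZMod.natCast_val, ZMod.cast_id]
      exact hx
    have hmod : d ≡ e * x.val [MOD n] := (ZMod.natCast_eq_natCast_iff _ _ _).mp hx'
    have hdvd : (n : ℤ) ∣ ((e * x.val : ℕ) : ℤ) - (d : ℕ) := (Nat.modEq_iff_dvd).mp hmod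
    have he' : (e : ℤ) ∣ ((e * x.val : ℕ) : ℤ) - (d : ℤ) := by
      exact dvd_trans (Int.natCast_dvd_natCast.mpr he) (by exact_mod_cast hdvd)
    have : (e : ℤ) ∣ (d : ℤ) := by
      have h1 : (e : ℤ) ∣ ((e * x.val : ℕ) : ℤ) := by push_cast; exact Dvd.intro _ rfl
      have := dvd_sub h1 he'
      simpa using this
    exact_mod_cast this
  · exact fun h => Nat.cast_dvd_cast h

lemma ZModIdeal.span_eq_bot {d : ℕ} :
    Ideal.span {(d : ZMod n)} = ⊥ ↔ n ∣ d := by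
  rw [Ideal.span_singleton_eq_bot, ZMod.natCast_eq_zero_iff]

lemma ZModIdeal.span_eq_top {d : ℕ} :
    Ideal.span {(d : ZMod n)} = ⊤ ↔ Nat.Coprime d n := by
  rw [Ideal.span_singleton_eq_top, ZMod.isUnit_iff_coprime]

lemma ZModIdeal.span_inj {d e : ℕ} (hd : d ∣ n) (he : e ∣ n)
    (h : Ideal.span {(d : ZMod n)} = Ideal.span {(e : ZMod n)}) : d = e :=
  Nat.dvd_antisymm ((ZModIdeal.span_le_span hd).mp h.ge) ((ZModIdeal.span_le_span he).mp h.le)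

end ZModIdeals

section PQ

variable {p q m : ℕ}

lemma pow_dvd_mix (hp : p.Prime) (hq : q.Prime) (hpq : p ≠ q) {a b k : ℕ} :
    p ^ k ∣ p ^ a * q ^ b ↔ k ≤ a := by
  constructor
  · intro h
    have hc : Nat.Coprime (p ^ k) (q ^ b) :=
      Nat.Coprime.pow _ _ ((Nat.coprime_primes hp hq).mpr hpq)
    have := hc.dvd_of_dvd_mul_right h
    exact (Nat.pow_dvd_pow_iff_le_right hp.one_lt).mp this
  · intro h
    exact dvd_mul_of_dvd_left (pow_dvd_pow p h) _

lemma pow_dvd_mix' (hp : p.Prime) (hq : q.Prime) (hpq : p ≠ q) {a b k : ℕ} :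
    q ^ k ∣ p ^ a * q ^ b ↔ k ≤ b := by
  rw [mul_comm]; exact pow_dvd_mix hq hp (Ne.symm hpq)

lemma dvd_pq (hp : p.Prime) (hq : q.Prime) {d : ℕ} (hd : d ∣ p ^ m * q ^ m) :
    ∃ a b, a ≤ m ∧ b ≤ m ∧ d = p ^ a * q ^ b := by
  obtain ⟨k1, k2, h1, h2, h⟩ := Nat.dvd_mul.mp hd
  obtain ⟨a, ha, rfl⟩ := (Nat.dvd_prime_pow hp).mp h1
  obtain ⟨b, hb, rfl⟩ := (Nat.dvd_prime_pow hq).mp h2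
  exact ⟨a, b, ha, hb, h.symm⟩

lemma pq_inj (hp : p.Prime) (hq : q.Prime) (hpq : p ≠ q) {a b c f : ℕ}
    (h : p ^ a * q ^ b = p ^ c * q ^ f) : a = c ∧ b = f := by
  have h1 : p ^ a ∣ p ^ c * q ^ f := h ▸ dvd_mul_right _ _
  have h2 : p ^ c ∣ p ^ a * q ^ b := h ▸ dvd_mul_right _ _
  have hac : a = c := le_antisymm ((pow_dvd_mix hp hq hpq).mp h1) ((pow_dvd_mix hp hq hpq).mp h2)
  subst hac
  refine ⟨rfl, ?_⟩
  have := Nat.eq_of_mul_eq_mul_left (pow_pos hp.pos a) h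
  exact Nat.pow_right_injective hq.two_le this

end PQ

section Essential

variable {p q m n : ℕ} [NeZero n]

lemma coprime_pows (hp : p.Prime) (hq : q.Prime) (hpq : p ≠ q) {a b : ℕ} :
    Nat.Coprime (p ^ a) (q ^ b) :=
  Nat.Coprime.pow _ _ ((Nat.coprime_primes hp hq).mpr hpq)

lemma essential_iff (hp : p.Prime) (hq : q.Prime) (hpq : p ≠ q) (hm : 1 < m)
    (hn : n = p ^ m * q ^ m) (J : Ideal (ZMod n)) :
    IsEssentialIdeal J ↔
      ¬(J ≤ Ideal.span {((p ^ m : ℕ) : ZMod n)}) ∧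
      ¬(J ≤ Ideal.span {((q ^ m : ℕ) : ZMod n)}) := by
  have hpm : p ^ m ∣ n := hn ▸ dvd_mul_right _ _
  have hqm : q ^ m ∣ n := hn ▸ dvd_mul_left _ _
  constructor
  · intro hess
    constructor
    · -- if J ≤ (p^m), then J ⊓ (p^(m-1) q^m) = ⊥
      intro hle
      set Mp : Ideal (ZMod n) := Ideal.span {((p ^ (m - 1) * q ^ m : ℕ) : ZMod n)} with hMp
      have hMpdvd : p ^ (m - 1) * q ^ m ∣ n := by
        rw [hn]
        exact mul_dvd_mul (pow_dvd_pow p (by omega)) dvd_rfl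
      have hMpne : Mp ≠ ⊥ := by
        rw [hMp, Ne, ZModIdeal.span_eq_bot, hn]
        intro hcon
        have : p ^ m ∣ p ^ (m - 1) * q ^ m := dvd_trans (dvd_mul_right _ _) hcon
        have := (pow_dvd_mix hp hq hpq).mp this
        omega
      have hinf : Ideal.span {((p ^ m : ℕ) : ZMod n)} ⊓ Mp = ⊥ := by
        obtain ⟨c, hc, hceq⟩ := ZModIdeal.exists_gen (Ideal.span {((p ^ m : ℕ) : ZMod n)} ⊓ Mp)
        rw [hceq, ZModIdeal.span_eq_bot]
        have h1 : p ^ m ∣ c :=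
          (ZModIdeal.span_le_span hpm).mp (hceq ▸ inf_le_left)
        have h2 : q ^ m ∣ c := dvd_trans (dvd_mul_left _ _)
          ((ZModIdeal.span_le_span hMpdvd).mp (hceq ▸ inf_le_right))
        rw [hn]
        exact (coprime_pows hp hq hpq).mul_dvd_of_dvd_of_dvd h1 h2
      exact hess Mp hMpne (eq_bot_iff.mpr (le_trans (inf_le_inf_right Mp hle) hinf.le))
    · intro hle
      set Mq : Ideal (ZMod n) := Ideal.span {((p ^ m * q ^ (m - 1) : ℕ) : ZMod n)} with hMq
      have hMqdvd : p ^ m * q ^ (m - 1) ∣ n := by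
        rw [hn]
        exact mul_dvd_mul dvd_rfl (pow_dvd_pow q (by omega))
      have hMqne : Mq ≠ ⊥ := by
        rw [hMq, Ne, ZModIdeal.span_eq_bot, hn]
        intro hcon
        have : q ^ m ∣ p ^ m * q ^ (m - 1) := dvd_trans (dvd_mul_left _ _) hcon
        have := (pow_dvd_mix' hp hq hpq).mp this
        omega
      have hinf : Ideal.span {((q ^ m : ℕ) : ZMod n)} ⊓ Mq = ⊥ := by
        obtain ⟨c, hc, hceq⟩ := ZModIdeal.exists_gen (Ideal.span {((q ^ m : ℕ) : ZMod n)} ⊓ Mq)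
        rw [hceq, ZModIdeal.span_eq_bot]
        have h1 : q ^ m ∣ c :=
          (ZModIdeal.span_le_span hqm).mp (hceq ▸ inf_le_left)
        have h2 : p ^ m ∣ c := dvd_trans (dvd_mul_right _ _)
          ((ZModIdeal.span_le_span hMqdvd).mp (hceq ▸ inf_le_right))
        rw [hn]
        exact (coprime_pows hp hq hpq).mul_dvd_of_dvd_of_dvd h2 h1
      exact hess Mq hMqne (eq_bot_iff.mpr (le_trans (inf_le_inf_right Mq hle) hinf.le))
  · rintro ⟨hP, hQ⟩ L hL
    obtain ⟨d, hd, rfl⟩ := ZModIdeal.exists_gen J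
    obtain ⟨e, he, rfl⟩ := ZModIdeal.exists_gen L
    have hdp : ¬ p ^ m ∣ d := fun h => hP ((ZModIdeal.span_le_span hpm).mpr h)
    have hdq : ¬ q ^ m ∣ d := fun h => hQ ((ZModIdeal.span_le_span hqm).mpr h)
    have hne : ¬ n ∣ e := fun h => hL (ZModIdeal.span_eq_bot.mpr h)
    intro hbot
    have hlcm : Nat.lcm d e ∣ n := Nat.lcm_dvd hd he
    have hsub : Ideal.span {((Nat.lcm d e : ℕ) : ZMod n)} ≤
        Ideal.span {((d : ℕ) : ZMod n)} ⊓ Ideal.span {((e : ℕ) : ZMod n)} :=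
      le_inf ((ZModIdeal.span_le_span hd).mpr (Nat.dvd_lcm_left d e))
        ((ZModIdeal.span_le_span he).mpr (Nat.dvd_lcm_right d e))
    have : Ideal.span {((Nat.lcm d e : ℕ) : ZMod n)} = ⊥ :=
      eq_bot_iff.mpr (hbot ▸ hsub)
    have hnlcm : n ∣ Nat.lcm d e := ZModIdeal.span_eq_bot.mp this
    -- now derive the contradiction
    obtain ⟨a, b, ha, hb, rfl⟩ := dvd_pq hp hq (hn ▸ hd)
    obtain ⟨c, f, hc, hf, rfl⟩ := dvd_pq hp hq (hn ▸ he)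
    have hX : Nat.lcm (p ^ a * q ^ b) (p ^ c * q ^ f) ∣ p ^ max a c * q ^ max b f :=
      Nat.lcm_dvd (mul_dvd_mul (pow_dvd_pow p (le_max_left a c)) (pow_dvd_pow q (le_max_left b f)))
        (mul_dvd_mul (pow_dvd_pow p (le_max_right a c)) (pow_dvd_pow q (le_max_right b f)))
    have hndvd : n ∣ p ^ max a c * q ^ max b f := dvd_trans hnlcm hX
    have hpmax : m ≤ max a c :=
      (pow_dvd_mix hp hq hpq).mp (dvd_trans (hn ▸ dvd_mul_right _ _) hndvd)
    have hqmax : m ≤ max b f :=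
      (pow_dvd_mix' hp hq hpq).mp (dvd_trans (hn ▸ dvd_mul_left _ _) hndvd)
    have ham : a < m := by
      by_contra hh
      exact hdp ((pow_dvd_mix hp hq hpq).mpr (by omega))
    have hbm : b < m := by
      by_contra hh
      exact hdq ((pow_dvd_mix' hp hq hpq).mpr (by omega))
    have hcm : c = m := by omega
    have hfm : f = m := by omega
    exact hne (by rw [hcm, hfm, hn])

end Essential


open Polynomial Matrix

set_option maxHeartbeats 2000000 in
lemma charpoly_eval_abstract (m : ℕ) (hm : 2 ≤ m) {V : Type*} [Fintype V] [DecidableEq V]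
    (τ : V → Fin 3)
    (h0 : (Finset.univ.filter fun i => τ i = 0).card = m ^ 2 - 1)
    (h1 : (Finset.univ.filter fun i => τ i = 1).card = m)
    (h2 : (Finset.univ.filter fun i => τ i = 2).card = m)
    (A : Matrix V V ℝ)
    (hA : ∀ i k, A i k =
      if i ≠ k ∧ ¬(τ i = 1 ∧ τ k = 1) ∧ ¬(τ i = 2 ∧ τ k = 2) then (1:ℝ) else 0)
    (x : ℝ) (hx0 : x ≠ 0) (hx1 : x + 1 ≠ 0) :
    Polynomial.eval x A.charpoly =
      x ^ (2*m-2) * (x+1) ^ (m^2-2) * (x + m) *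
        (x^2 - ((m:ℝ)^2 + m - 2)*x - (m:ℝ)^3) := by
  classical
  have fin3 : ∀ c : Fin 3, c = 0 ∨ c = 1 ∨ c = 2 := by decide
  set U : Matrix V (Fin 3) ℝ :=
    Matrix.of (fun i j => if j = 0 then 1 else if τ i = j then 1 else 0) with hU
  set W : Matrix (Fin 3) V ℝ :=
    Matrix.of (fun j i => if j = 0 then 1 else if τ i = j then -1 else 0) with hW
  set w : V → ℝ := fun i => if τ i = 0 then 1 else 0 with hw
  have hwx : ∀ i, x + w i ≠ 0 := by
    intro i
    by_cases h : τ i = 0 <;> simp only [hw, h, if_true, if_false] <;> simpa [h]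
  have hAband : A = U * W - Matrix.diagonal w := by
    rw [hU, hW, hw]
    ext i k
    rw [hA, Matrix.sub_apply, Matrix.mul_apply, Fin.sum_univ_three]
    rcases fin3 (τ i) with hi | hi | hi <;> rcases fin3 (τ k) with hk | hk | hk <;>
      by_cases hik : i = k <;>
      simp [hi, hk, hik, Matrix.diagonal_apply] <;> simp_all
  have charpoly_eval : Polynomial.eval x A.charpoly
      = Matrix.det (Matrix.diagonal (fun _ => x) - A) := by
    rw [Matrix.charpoly, ← Polynomial.coe_evalRingHom, RingHom.map_det]
    congr 1
    ext i k
    by_cases h : i = k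
    · subst h
      simp [Matrix.charmatrix_apply_eq, Matrix.sub_apply]
    · simp [Matrix.charmatrix_apply_ne _ _ _ h, Matrix.sub_apply,
        Matrix.diagonal_apply_ne _ h]
  set F : Matrix V V ℝ := Matrix.diagonal (fun i => (x + w i)⁻¹) with hF
  have hEF : Matrix.diagonal (fun i => x + w i) * F = 1 := by
    rw [hF, Matrix.diagonal_mul_diagonal]
    have hfun : (fun i => (x + w i) * (x + w i)⁻¹) = fun _ : V => (1:ℝ) :=
      funext fun i => mul_inv_cancel₀ (hwx i)
    rw [hfun, Matrix.diagonal_one]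
  have hsplit : Matrix.diagonal (fun _ => x) - A
      = Matrix.diagonal (fun i => x + w i) * (1 - F * (U * W)) := by
    rw [Matrix.mul_sub, Matrix.mul_one, ← Matrix.mul_assoc, hEF, Matrix.one_mul, hAband]
    have hd : Matrix.diagonal (fun i => x + w i)
        = Matrix.diagonal (fun _ => x) + Matrix.diagonal w := by
      rw [Matrix.diagonal_add]
    rw [hd]
    abel
  have hdet1 : Matrix.det (Matrix.diagonal (fun _ => x) - A)
      = (∏ i, (x + w i)) * Matrix.det (1 - W * (F * U)) := by
    rw [hsplit, Matrix.det_mul, Matrix.det_diagonal]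
    congr 1
    rw [show F * (U * W) = (F * U) * W from (Matrix.mul_assoc F U W).symm,
      Matrix.det_one_sub_mul_comm]
  have hcard' : (Finset.univ.filter fun i => ¬ τ i = 0).card = 2 * m := by
    have hset : (Finset.univ.filter fun i => ¬ τ i = 0)
        = (Finset.univ.filter fun i => τ i = 1) ∪ (Finset.univ.filter fun i => τ i = 2) := by
      ext i
      simp only [Finset.mem_filter, Finset.mem_union, Finset.mem_univ, true_and]
      rcases fin3 (τ i) with h | h | h <;> simp [h]
    have hdisj : Disjoint (Finset.univ.filter fun i => τ i = 1)
        (Finset.univ.filter fun i => τ i = 2) := by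
      rw [Finset.disjoint_left]
      intro a ha hb
      simp only [Finset.mem_filter] at ha hb
      rw [ha.2] at hb
      exact absurd hb.2 (by decide)
    rw [hset, Finset.card_union_of_disjoint hdisj, h1, h2]
    ring
  have hprod : (∏ i, (x + w i)) = (x+1) ^ (m^2-1) * x ^ (2*m) := by
    have hite : ∀ i, x + w i = if τ i = 0 then x + 1 else x := by
      intro i
      by_cases h : τ i = 0 <;> simp [hw, h] <;> ring
    simp_rw [hite]
    rw [Finset.prod_ite, Finset.prod_const, Finset.prod_const, h0, hcard']
  have hsum : ∀ f : Fin 3 → ℝ, (∑ i, f (τ i))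
      = (m^2-1 : ℕ) * f 0 + m * f 1 + m * f 2 := by
    intro f
    rw [← Finset.sum_fiberwise_of_maps_to' (fun i _ => Finset.mem_univ (τ i)) f,
      Fin.sum_univ_three]
    simp [Finset.sum_const, h0, h1, h2]
  set g : Fin 3 → Fin 3 → Fin 3 → ℝ := fun j k c =>
    (if j = 0 then 1 else if c = j then -1 else 0) *
      ((x + if c = 0 then 1 else 0)⁻¹ * (if k = 0 then 1 else if c = k then 1 else 0)) with hg
  have hM3 : ∀ j k, (W * (F * U)) j k
      = (m^2-1 : ℕ) * g j k 0 + m * g j k 1 + m * g j k 2 := by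
    intro j k
    rw [Matrix.mul_apply]
    have he : ∀ i, W j i * (F * U) i k = g j k (τ i) := by
      intro i
      rw [hF, Matrix.diagonal_mul]
      simp only [hW, hU, hw, hg, Matrix.of_apply]
    simp_rw [he]
    exact hsum _
  have hcast : ((m^2-1 : ℕ) : ℝ) = (m:ℝ)^2 - 1 := by
    have : 1 ≤ m^2 := by nlinarith
    push_cast [Nat.cast_sub this]
    ring
  have h00 : (W * (F * U)) 0 0 = ((m:ℝ)^2-1)*(x+1)⁻¹ + m*x⁻¹ + m*x⁻¹ := by
    rw [hM3 0 0, hcast]; simp only [hg]; norm_num [Fin.isValue, show ((1:Fin 3)=0)=False by decide, show ((2:Fin 3)=0)=False by decide, show ((0:Fin 3)=1)=False by decide, show ((2:Fin 3)=1)=False by decide, show ((0:Fin 3)=2)=False by decide, show ((1:Fin 3)=2)=False by decide]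
  have h01 : (W * (F * U)) 0 1 = m*x⁻¹ := by
    rw [hM3 0 1, hcast]; simp only [hg]; norm_num [Fin.isValue, show ((1:Fin 3)=0)=False by decide, show ((2:Fin 3)=0)=False by decide, show ((0:Fin 3)=1)=False by decide, show ((2:Fin 3)=1)=False by decide, show ((0:Fin 3)=2)=False by decide, show ((1:Fin 3)=2)=False by decide]
  have h02 : (W * (F * U)) 0 2 = m*x⁻¹ := by
    rw [hM3 0 2, hcast]; simp only [hg]; norm_num [Fin.isValue, show ((1:Fin 3)=0)=False by decide, show ((2:Fin 3)=0)=False by decide, show ((0:Fin 3)=1)=False by decide, show ((2:Fin 3)=1)=False by decide, show ((0:Fin 3)=2)=False by decide, show ((1:Fin 3)=2)=False by decide]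
  have h10 : (W * (F * U)) 1 0 = -(m*x⁻¹) := by
    rw [hM3 1 0, hcast]; simp only [hg]; norm_num [Fin.isValue, show ((1:Fin 3)=0)=False by decide, show ((2:Fin 3)=0)=False by decide, show ((0:Fin 3)=1)=False by decide, show ((2:Fin 3)=1)=False by decide, show ((0:Fin 3)=2)=False by decide, show ((1:Fin 3)=2)=False by decide]
  have h11 : (W * (F * U)) 1 1 = -(m*x⁻¹) := by
    rw [hM3 1 1, hcast]; simp only [hg]; norm_num [Fin.isValue, show ((1:Fin 3)=0)=False by decide, show ((2:Fin 3)=0)=False by decide, show ((0:Fin 3)=1)=False by decide, show ((2:Fin 3)=1)=False by decide, show ((0:Fin 3)=2)=False by decide, show ((1:Fin 3)=2)=False by decide]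
  have h12 : (W * (F * U)) 1 2 = 0 := by
    rw [hM3 1 2, hcast]; simp only [hg]; norm_num [Fin.isValue, show ((1:Fin 3)=0)=False by decide, show ((2:Fin 3)=0)=False by decide, show ((0:Fin 3)=1)=False by decide, show ((2:Fin 3)=1)=False by decide, show ((0:Fin 3)=2)=False by decide, show ((1:Fin 3)=2)=False by decide]
  have h20 : (W * (F * U)) 2 0 = -(m*x⁻¹) := by
    rw [hM3 2 0, hcast]; simp only [hg]; norm_num [Fin.isValue, show ((1:Fin 3)=0)=False by decide, show ((2:Fin 3)=0)=False by decide, show ((0:Fin 3)=1)=False by decide, show ((2:Fin 3)=1)=False by decide, show ((0:Fin 3)=2)=False by decide, show ((1:Fin 3)=2)=False by decide]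
  have h21 : (W * (F * U)) 2 1 = 0 := by
    rw [hM3 2 1, hcast]; simp only [hg]; norm_num [Fin.isValue, show ((1:Fin 3)=0)=False by decide, show ((2:Fin 3)=0)=False by decide, show ((0:Fin 3)=1)=False by decide, show ((2:Fin 3)=1)=False by decide, show ((0:Fin 3)=2)=False by decide, show ((1:Fin 3)=2)=False by decide]
  have h22 : (W * (F * U)) 2 2 = -(m*x⁻¹) := by
    rw [hM3 2 2, hcast]; simp only [hg]; norm_num [Fin.isValue, show ((1:Fin 3)=0)=False by decide, show ((2:Fin 3)=0)=False by decide, show ((0:Fin 3)=1)=False by decide, show ((2:Fin 3)=1)=False by decide, show ((0:Fin 3)=2)=False by decide, show ((1:Fin 3)=2)=False by decide]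
  have hdet3 : Matrix.det (1 - W * (F * U))
      = ((x + m) * (x^2 - ((m:ℝ)^2 + m - 2)*x - (m:ℝ)^3)) / ((x+1) * x^2) := by
    rw [Matrix.det_fin_three]
    simp only [Matrix.sub_apply, h00, h01, h02, h10, h11, h12, h20, h21, h22,
      Matrix.one_apply_eq, Matrix.one_apply_ne (by decide : (0:Fin 3) ≠ 1),
      Matrix.one_apply_ne (by decide : (0:Fin 3) ≠ 2),
      Matrix.one_apply_ne (by decide : (1:Fin 3) ≠ 0),
      Matrix.one_apply_ne (by decide : (1:Fin 3) ≠ 2),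
      Matrix.one_apply_ne (by decide : (2:Fin 3) ≠ 0),
      Matrix.one_apply_ne (by decide : (2:Fin 3) ≠ 1)]
    field_simp
    ring
  rw [charpoly_eval, hdet1, hprod, hdet3]
  have e1 : m^2 - 1 = (m^2 - 2) + 1 := by
    have h4 : 2 ≤ m^2 := by nlinarith
    omega
  have e2 : 2*m = (2*m - 2) + 2 := by omega
  rw [e1, e2, pow_succ, pow_add]
  rw [show 2 * m - 2 + 2 - 2 = 2 * m - 2 by omega]
  field_simp

set_option maxHeartbeats 1000000 in
lemma energy_abstract (m : ℕ) (hm : 2 ≤ m) {V : Type*} [Fintype V] [DecidableEq V]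
    (τ : V → Fin 3)
    (h0 : (Finset.univ.filter fun i => τ i = 0).card = m ^ 2 - 1)
    (h1 : (Finset.univ.filter fun i => τ i = 1).card = m)
    (h2 : (Finset.univ.filter fun i => τ i = 2).card = m)
    (A : Matrix V V ℝ)
    (hA : ∀ i k, A i k =
      if i ≠ k ∧ ¬(τ i = 1 ∧ τ k = 1) ∧ ¬(τ i = 2 ∧ τ k = 2) then (1:ℝ) else 0) :
    ((A.charpoly.roots.map (fun y => |y|)).sum : ℝ)
      = ((m:ℝ)^2 + m - 2) + Real.sqrt (((m:ℝ)^2 + m - 2)^2 + 4*(m:ℝ)^3) := by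
  have hm' : (2:ℝ) ≤ (m:ℝ) := by exact_mod_cast hm
  set k : ℝ := (m:ℝ)^2 + m - 2 with hk
  set D : ℝ := Real.sqrt (k^2 + 4*(m:ℝ)^3) with hD
  have hm3 : (0:ℝ) < (m:ℝ)^3 := by positivity
  have hD2 : D^2 = k^2 + 4*(m:ℝ)^3 := Real.sq_sqrt (by nlinarith)
  have hD0 : 0 ≤ D := Real.sqrt_nonneg _
  have hk0 : (0:ℝ) < k := by nlinarith
  have hDk : k < D := by nlinarith
  set r₁ : ℝ := (k + D)/2 with hr₁
  set r₂ : ℝ := (k - D)/2 with hr₂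
  set s : Multiset ℝ :=
    Multiset.replicate (2*m-2) 0 + Multiset.replicate (m^2-2) (-1) + {-(m:ℝ), r₁, r₂} with hs
  have hsum12 : r₁ + r₂ = k := by rw [hr₁, hr₂]; ring
  have hpr : r₁ * r₂ = -((m:ℝ)^3) := by
    have hh : r₁ * r₂ = (k^2 - D^2)/4 := by rw [hr₁, hr₂]; ring
    rw [hh, hD2]; ring
  have hquad : ∀ x : ℝ, (x - r₁) * (x - r₂) = x^2 - k*x - (m:ℝ)^3 := by
    intro x
    have : (x - r₁) * (x - r₂) = x^2 - (r₁ + r₂)*x + r₁*r₂ := by ring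
    rw [this, hsum12, hpr]; ring
  have hevals : ∀ x : ℝ, Polynomial.eval x ((s.map (fun a => Polynomial.X - Polynomial.C a)).prod)
      = (x - 0)^(2*m-2) * (x - (-1))^(m^2-2) * ((x - (-(m:ℝ))) * ((x - r₁) * (x - r₂))) := by
    intro x
    rw [hs]
    simp only [Multiset.map_add, Multiset.prod_add, Polynomial.eval_mul,
      Multiset.map_replicate, Multiset.prod_replicate, Polynomial.eval_pow,
      Polynomial.eval_sub, Polynomial.eval_X, Polynomial.eval_C,
      Multiset.insert_eq_cons, Multiset.map_cons, Multiset.prod_cons,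
      Multiset.map_singleton, Multiset.prod_singleton]
    try ring
  have hfact : A.charpoly = (s.map (fun a => Polynomial.X - Polynomial.C a)).prod := by
    apply Polynomial.eq_of_infinite_eval_eq
    have hsub : {x : ℝ | x ≠ 0 ∧ x + 1 ≠ 0} ⊆
        {x : ℝ | Polynomial.eval x A.charpoly
          = Polynomial.eval x ((s.map (fun a => Polynomial.X - Polynomial.C a)).prod)} := by
      rintro x ⟨hx0, hx1⟩
      have := charpoly_eval_abstract m hm τ h0 h1 h2 A hA x hx0 hx1
      rw [Set.mem_setOf_eq, this, hevals x, hquad x]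
      push_cast
      ring
    refine Set.Infinite.mono hsub ?_
    have : {x : ℝ | x ≠ 0 ∧ x + 1 ≠ 0} = ({0, -1} : Set ℝ)ᶜ := by
      ext x
      simp only [Set.mem_setOf_eq, Set.mem_compl_iff, Set.mem_insert_iff, Set.mem_singleton_iff]
      constructor
      · rintro ⟨a, b⟩ (rfl | rfl)
        · exact a rfl
        · exact b (by ring)
      · intro h
        refine ⟨fun hh => h (Or.inl hh), fun hh => h (Or.inr (by linarith))⟩
    rw [this]
    exact Set.Finite.infinite_compl (by simp)
  rw [hfact, Polynomial.roots_multiset_prod_X_sub_C, hs]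
  simp only [Multiset.map_add, Multiset.sum_add, Multiset.map_replicate,
    Multiset.sum_replicate, Multiset.insert_eq_cons, Multiset.map_cons,
    Multiset.sum_cons, Multiset.map_singleton, Multiset.sum_singleton]
  have ha0 : |(0:ℝ)| = 0 := abs_zero
  have ha1 : |(-1:ℝ)| = 1 := by norm_num
  have ham : |(-(m:ℝ))| = (m:ℝ) := by rw [abs_neg, abs_of_nonneg (by linarith)]
  have har₁ : |r₁| = r₁ := abs_of_nonneg (by rw [hr₁]; linarith)
  have har₂ : |r₂| = -r₂ := abs_of_nonpos (by rw [hr₂]; linarith)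
  rw [ha0, ha1, ham, har₁, har₂]
  have hcast2 : ((m^2 - 2 : ℕ) : ℝ) = (m:ℝ)^2 - 2 := by
    have h4 : 2 ≤ m^2 := by nlinarith
    push_cast [Nat.cast_sub h4]
    ring
  simp only [smul_eq_mul, nsmul_eq_mul, mul_zero, mul_one, zero_add, hcast2]
  rw [hr₁, hr₂, hk]
  ring

/-- For `n = pᵐqᵐ` with `p ≠ q` primes and `m > 1`, the energy of the essential ideal
graph of `ZMod n` equals `k + √(k² + 4m³)` where `k = m² + m - 2`. -/
theorem energy_essentialIdealGraph_pmqm (p q m n : ℕ)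
    (hp : p.Prime) (hq : q.Prime) (hpq : p ≠ q) (hm : 1 < m)
    (hn : n = p ^ m * q ^ m) [NeZero n] :
    essEnergy n =
      ((m : ℝ) ^ 2 + m - 2) +
        Real.sqrt (((m : ℝ) ^ 2 + m - 2) ^ 2 + 4 * (m : ℝ) ^ 3) := by
  classical
  have hm2 : 2 ≤ m := hm
  have hm0 : m ≠ 0 := by omega
  have hpm : p ^ m ∣ n := hn ▸ dvd_mul_right _ _
  have hqm : q ^ m ∣ n := hn ▸ dvd_mul_left _ _
  set Pm : Ideal (ZMod n) := Ideal.span {((p ^ m : ℕ) : ZMod n)} with hPm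
  set Qm : Ideal (ZMod n) := Ideal.span {((q ^ m : ℕ) : ZMod n)} with hQm
  -- no vertex is below both
  have hnotboth : ∀ I : EssVert n, ¬(I.1 ≤ Pm ∧ I.1 ≤ Qm) := by
    rintro I ⟨hle1, hle2⟩
    obtain ⟨d, hd, hde⟩ := ZModIdeal.exists_gen I.1
    have hdp : p ^ m ∣ d := (ZModIdeal.span_le_span hpm).mp (hde ▸ hle1)
    have hdq : q ^ m ∣ d := (ZModIdeal.span_le_span hqm).mp (hde ▸ hle2)
    have hnd : n ∣ d := hn ▸ (coprime_pows hp hq hpq).mul_dvd_of_dvd_of_dvd hdp hdq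
    exact I.2.1 (hde.trans (ZModIdeal.span_eq_bot.mpr hnd))
  set τ : EssVert n → Fin 3 :=
    fun I => if I.1 ≤ Pm then 1 else if I.1 ≤ Qm then 2 else 0 with hτ
  have hτ1 : ∀ I, τ I = 1 ↔ I.1 ≤ Pm := by
    intro I
    by_cases hle1 : I.1 ≤ Pm
    · simp [hτ, hle1]
    · by_cases hle2 : I.1 ≤ Qm <;> simp [hτ, hle1, hle2]
  have hτ2 : ∀ I, τ I = 2 ↔ I.1 ≤ Qm := by
    intro I
    by_cases hle1 : I.1 ≤ Pm
    · have hb := hnotboth I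
      simp only [hτ, hle1, if_true]
      constructor
      · intro hco; exact absurd hco (by decide)
      · intro hle2; exact absurd ⟨hle1, hle2⟩ hb
    · by_cases hle2 : I.1 ≤ Qm <;> simp [hτ, hle1, hle2]
  have hτ0 : ∀ I, τ I = 0 ↔ ¬ I.1 ≤ Pm ∧ ¬ I.1 ≤ Qm := by
    intro I
    by_cases hle1 : I.1 ≤ Pm
    · simp [hτ, hle1]
    · by_cases hle2 : I.1 ≤ Qm <;> simp [hτ, hle1, hle2]
  -- adjacency matrix description
  have hAdj : ∀ I K : EssVert n, essAdjMatrix n I K =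
      if I ≠ K ∧ ¬(τ I = 1 ∧ τ K = 1) ∧ ¬(τ I = 2 ∧ τ K = 2) then (1:ℝ) else 0 := by
    intro I K
    show (if (essentialIdealGraph (ZMod n)).Adj I K then (1:ℝ) else 0) = _
    refine if_congr ?_ rfl rfl
    show (I ≠ K ∧ IsEssentialIdeal (I.1 ⊔ K.1)) ↔ _
    rw [essential_iff hp hq hpq hm hn, sup_le_iff, sup_le_iff, hτ1, hτ1 K, hτ2, hτ2 K]
    try tauto
  -- helpers for building vertices
  have hprdvd : ∀ a b : ℕ, a ≤ m → b ≤ m → p ^ a * q ^ b ∣ n := fun a b ha hb =>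
    hn ▸ mul_dvd_mul (pow_dvd_pow p ha) (pow_dvd_pow q hb)
  have hnotco : ∀ r d : ℕ, r.Prime → r ∣ d → r ∣ n → ¬ Nat.Coprime d n := by
    intro r d hr h1 h2 hco
    have : r ∣ Nat.gcd d n := Nat.dvd_gcd h1 h2
    rw [Nat.Coprime] at hco
    rw [hco] at this
    exact hr.one_lt.ne' (Nat.dvd_one.mp this)
  have hpn : p ∣ n := hn ▸ dvd_mul_of_dvd_left (dvd_pow_self p hm0) _
  have hqn : q ∣ n := hn ▸ dvd_mul_of_dvd_right (dvd_pow_self q hm0) _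
  have mkmem : ∀ a b : ℕ, a ≤ m → b ≤ m → ¬(a = m ∧ b = m) → ¬(a = 0 ∧ b = 0) →
      (Ideal.span {((p ^ a * q ^ b : ℕ) : ZMod n)} ≠ ⊥ ∧
        Ideal.span {((p ^ a * q ^ b : ℕ) : ZMod n)} ≠ ⊤) := by
    intro a b ha hb hnm h0
    constructor
    · rw [Ne, ZModIdeal.span_eq_bot]
      intro hcon
      have h1 : p ^ m ∣ p ^ a * q ^ b := dvd_trans hpm hcon
      have h2 : q ^ m ∣ p ^ a * q ^ b := dvd_trans hqm hcon
      exact hnm ⟨le_antisymm ha ((pow_dvd_mix hp hq hpq).mp h1),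
        le_antisymm hb ((pow_dvd_mix' hp hq hpq).mp h2)⟩
    · rw [Ne, ZModIdeal.span_eq_top]
      rcases Nat.eq_zero_or_pos a with rfl | hap
      · rcases Nat.eq_zero_or_pos b with rfl | hbp
        · exact absurd ⟨rfl, rfl⟩ h0
        · exact hnotco q _ hq (dvd_mul_of_dvd_right (dvd_pow_self q hbp.ne') _) hqn
      · exact hnotco p _ hp (dvd_mul_of_dvd_left (dvd_pow_self p hap.ne') _) hpn
  -- fiber cardinalities
  have hcard1 : (Finset.univ.filter fun I : EssVert n => τ I = 1).card = m := by
    rw [← Finset.card_fin m]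
    symm
    refine Finset.card_bij
      (fun (b : Fin m) (_ : b ∈ Finset.univ) =>
        (⟨Ideal.span {((p ^ m * q ^ (b : ℕ) : ℕ) : ZMod n)},
          mkmem m b le_rfl b.2.le (fun h => absurd h.2 b.2.ne) (fun h => hm0 h.1)⟩ : EssVert n))
      ?_ ?_ ?_
    · intro b _
      rw [Finset.mem_filter]
      exact ⟨Finset.mem_univ _, (hτ1 _).mpr ((ZModIdeal.span_le_span hpm).mpr ⟨q ^ (b:ℕ), rfl⟩)⟩
    · intro b _ b' _ hbe
      have hspan := Subtype.ext_iff.mp hbe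
      have := ZModIdeal.span_inj (hprdvd m b le_rfl b.2.le) (hprdvd m b' le_rfl b'.2.le) hspan
      exact Fin.ext (pq_inj hp hq hpq this).2
    · intro I hI
      rw [Finset.mem_filter] at hI
      have hle : I.1 ≤ Pm := (hτ1 I).mp hI.2
      obtain ⟨d, hd, hde⟩ := ZModIdeal.exists_gen I.1
      have hdp : p ^ m ∣ d := (ZModIdeal.span_le_span hpm).mp (hde ▸ hle)
      obtain ⟨a, b, ha, hb, rfl⟩ := dvd_pq hp hq (hn ▸ hd)
      have ham : a = m := le_antisymm ha ((pow_dvd_mix hp hq hpq).mp hdp)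
      have hbm : b < m := by
        rcases lt_or_eq_of_le hb with h | rfl
        · exact h
        · exfalso
          exact I.2.1 (hde.trans (ZModIdeal.span_eq_bot.mpr (by rw [hn, ham])))
      refine ⟨⟨b, hbm⟩, Finset.mem_univ _, ?_⟩
      apply Subtype.ext
      rw [hde, ham]
  have hcard2 : (Finset.univ.filter fun I : EssVert n => τ I = 2).card = m := by
    rw [← Finset.card_fin m]
    symm
    refine Finset.card_bij
      (fun (a : Fin m) (_ : a ∈ Finset.univ) =>
        (⟨Ideal.span {((p ^ (a : ℕ) * q ^ m : ℕ) : ZMod n)},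
          mkmem a m a.2.le le_rfl (fun h => absurd h.1 a.2.ne) (fun h => hm0 h.2)⟩ : EssVert n))
      ?_ ?_ ?_
    · intro a _
      rw [Finset.mem_filter]
      refine ⟨Finset.mem_univ _, (hτ2 _).mpr ((ZModIdeal.span_le_span hqm).mpr ⟨p ^ (a:ℕ), mul_comm _ _⟩)⟩
    · intro a _ a' _ hbe
      have hspan := Subtype.ext_iff.mp hbe
      have := ZModIdeal.span_inj (hprdvd a m a.2.le le_rfl) (hprdvd a' m a'.2.le le_rfl) hspan
      exact Fin.ext (pq_inj hp hq hpq this).1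
    · intro I hI
      rw [Finset.mem_filter] at hI
      have hle : I.1 ≤ Qm := (hτ2 I).mp hI.2
      obtain ⟨d, hd, hde⟩ := ZModIdeal.exists_gen I.1
      have hdq : q ^ m ∣ d := (ZModIdeal.span_le_span hqm).mp (hde ▸ hle)
      obtain ⟨a, b, ha, hb, rfl⟩ := dvd_pq hp hq (hn ▸ hd)
      have hbm : b = m := le_antisymm hb ((pow_dvd_mix' hp hq hpq).mp hdq)
      have ham : a < m := by
        rcases lt_or_eq_of_le ha with h | rfl
        · exact h
        · exfalso
          exact I.2.1 (hde.trans (ZModIdeal.span_eq_bot.mpr (by rw [hn, hbm])))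
      refine ⟨⟨a, ham⟩, Finset.mem_univ _, ?_⟩
      apply Subtype.ext
      rw [hde, hbm]
  have hcard0 : (Finset.univ.filter fun I : EssVert n => τ I = 0).card = m ^ 2 - 1 := by
    have hsrc : ((Finset.univ : Finset (Fin m × Fin m)).erase (⟨0, Nat.lt_of_lt_of_le one_pos hm.le⟩, ⟨0, Nat.lt_of_lt_of_le one_pos hm.le⟩)).card = m ^ 2 - 1 := by
      rw [Finset.card_erase_of_mem (Finset.mem_univ _), Finset.card_univ, Fintype.card_prod,
        Fintype.card_fin, show m * m = m ^ 2 by ring]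
    rw [← hsrc]
    symm
    refine Finset.card_bij
      (fun (ab : Fin m × Fin m) (hab : ab ∈ _) =>
        (⟨Ideal.span {((p ^ (ab.1 : ℕ) * q ^ (ab.2 : ℕ) : ℕ) : ZMod n)},
          mkmem ab.1 ab.2 ab.1.2.le ab.2.2.le (fun h => absurd h.1 ab.1.2.ne)
            (fun h => by
              refine (Finset.mem_erase.mp hab).1 ?_
              ext <;> simp [h.1, h.2])⟩ : EssVert n))
      ?_ ?_ ?_
    · intro ab hab
      rw [Finset.mem_filter]
      refine ⟨Finset.mem_univ _, (hτ0 _).mpr ⟨?_, ?_⟩⟩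
      · intro hle
        have := (ZModIdeal.span_le_span hpm).mp hle
        exact absurd ((pow_dvd_mix hp hq hpq).mp this) (by omega)
      · intro hle
        have := (ZModIdeal.span_le_span hqm).mp hle
        have hb := ab.2.2
        exact absurd ((pow_dvd_mix' hp hq hpq).mp this) (by omega)
    · intro ab _ ab' _ hbe
      have hspan := Subtype.ext_iff.mp hbe
      have := ZModIdeal.span_inj (hprdvd _ _ ab.1.2.le ab.2.2.le)
        (hprdvd _ _ ab'.1.2.le ab'.2.2.le) hspan
      obtain ⟨h1, h2⟩ := pq_inj hp hq hpq this
      exact Prod.ext (Fin.ext h1) (Fin.ext h2)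
    · intro I hI
      rw [Finset.mem_filter] at hI
      obtain ⟨hle1, hle2⟩ := (hτ0 I).mp hI.2
      obtain ⟨d, hd, hde⟩ := ZModIdeal.exists_gen I.1
      obtain ⟨a, b, ha, hb, rfl⟩ := dvd_pq hp hq (hn ▸ hd)
      have ham : a < m := by
        rcases lt_or_eq_of_le ha with h | rfl
        · exact h
        · exact absurd (hde ▸ (ZModIdeal.span_le_span hpm).mpr ⟨q ^ b, rfl⟩) hle1
      have hbm : b < m := by
        rcases lt_or_eq_of_le hb with h | rfl
        · exact h
        · exact absurd (hde ▸ (ZModIdeal.span_le_span hqm).mpr ⟨p ^ a, mul_comm _ _⟩) hle2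
      have hab0 : ¬(a = 0 ∧ b = 0) := by
        rintro ⟨rfl, rfl⟩
        refine I.2.2 (hde.trans (ZModIdeal.span_eq_top.mpr ?_))
        simpa using Nat.coprime_one_left n
      refine ⟨(⟨a, ham⟩, ⟨b, hbm⟩), ?_, ?_⟩
      · rw [Finset.mem_erase]
        refine ⟨?_, Finset.mem_univ _⟩
        intro hcon
        apply hab0
        rw [Prod.ext_iff, Fin.ext_iff, Fin.ext_iff] at hcon
        exact ⟨hcon.1, hcon.2⟩
      · exact (Subtype.ext hde.symm)
  have := energy_abstract m hm2 τ hcard0 hcard1 hcard2 (essAdjMatrix n) hAdj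
  rw [essEnergy]
  exact this
end

section
/- Let n = p_1 p_2 p_3 where p_1, p_2, p_3 are distinct primes. Then the energy of the essential ideal graph E_{Z_n} equals 2(√2 + √5). -/
open Polynomial

/-! ### Auxiliary material -/

section Aux

open Polynomial

/-- Order isomorphism of ideal lattices induced by a ring equivalence. -/
def idealOrderIsoOfRingEquiv {R S : Type*} [CommRing R] [CommRing S] (e : R ≃+* S) :
    Ideal R ≃o Ideal S where
  toFun I := I.map (e : R →+* S)
  invFun I := I.map (e.symm : S →+* R)
  left_inv I := Ideal.map_of_equiv e
  right_inv I := Ideal.map_of_equiv e.symm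
  map_rel_iff' := by
    intro I J
    constructor
    · intro h
      change Ideal.map (e : R →+* S) I ≤ Ideal.map (e : R →+* S) J at h
      have := Ideal.map_mono (f := (e.symm : S →+* R)) h
      simpa [Ideal.map_of_equiv] using this
    · exact fun h => Ideal.map_mono h

/-- Order isomorphism between ideals of a product ring and the product of ideal lattices. -/
def idealProdOrderIso (R S : Type*) [CommRing R] [CommRing S] :
    Ideal (R × S) ≃o Ideal R × Ideal S :=
  { Ideal.idealProdEquiv with
    map_rel_iff' := by
      intro I J
      constructor
      · intro h
        have h1 : Ideal.prod (Ideal.map (RingHom.fst R S) I) (Ideal.map (RingHom.snd R S) I)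
            ≤ Ideal.prod (Ideal.map (RingHom.fst R S) J) (Ideal.map (RingHom.snd R S) J) :=
          fun x hx => ⟨h.1 hx.1, h.2 hx.2⟩
        rwa [← Ideal.ideal_prod_eq I, ← Ideal.ideal_prod_eq J] at h1
      · intro h
        exact ⟨Ideal.map_mono h, Ideal.map_mono h⟩ }

/-- Product of two order isomorphisms. -/
def prodOrderIsoCongr {α β γ δ : Type*} [LE α] [LE β] [LE γ] [LE δ]
    (e₁ : α ≃o β) (e₂ : γ ≃o δ) : α × γ ≃o β × δ where
  toEquiv := Equiv.prodCongr e₁.toEquiv e₂.toEquiv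
  map_rel_iff' := by
    intro x y
    simp [Prod.le_def, e₁.map_rel_iff, e₂.map_rel_iff, Equiv.prodCongr]

/-- Order isomorphism between ideals of a field and `Bool`. -/
noncomputable def idealFieldOrderIso (K : Type*) [Field K] : Ideal K ≃o Bool where
  toFun I := @decide (I = ⊤) (Classical.dec _)
  invFun b := if b then ⊤ else ⊥
  left_inv I := by
    rcases I.eq_bot_or_top with h | h <;> simp [h, bot_ne_top (α := Ideal K)]
  right_inv b := by
    cases b <;> simp [bot_ne_top (α := Ideal K)]
  map_rel_iff' := by
    intro I J
    rcases I.eq_bot_or_top with h | h <;> rcases J.eq_bot_or_top with h' | h' <;>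
      simp [h, h', bot_ne_top (α := Ideal K), Bool.le_iff_imp]

/-- If the ideal lattice of `R` is isomorphic to a Boolean algebra, then the only
essential ideal of `R` is the top ideal. -/
lemma isEssentialIdeal_iff_of_orderIso {R B : Type*} [CommRing R] [BooleanAlgebra B]
    (L : Ideal R ≃o B) (I : Ideal R) : IsEssentialIdeal I ↔ I = ⊤ := by
  constructor
  · intro h
    by_contra hI
    have hJ : L.symm (L I)ᶜ ≠ ⊥ := by
      intro hb
      apply hI
      have h1 := congrArg L hb
      rw [L.apply_symm_apply, L.map_bot, compl_eq_bot] at h1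
      exact L.injective (by rw [h1, L.map_top])
    refine h _ hJ ?_
    apply L.injective
    rw [L.map_inf, L.apply_symm_apply, inf_compl_eq_bot, L.map_bot]
  · rintro rfl J hJ
    simpa [top_inf_eq] using hJ

noncomputable def theM6 : Matrix (Fin 6) (Fin 6) ℝ :=
  !![0,0,0,1,0,0; 0,0,0,0,1,0; 0,0,0,0,0,1; 1,0,0,0,1,1; 0,1,0,1,0,1; 0,0,1,1,1,0]

noncomputable def theN6 : Matrix (Fin 6) (Fin 6) ℝ[X] :=
  !![X,0,0,-1,0,0; 0,X,0,0,-1,0; 0,0,X,0,0,-1; -1,0,0,X,-1,-1; 0,-1,0,-1,X,-1; 0,0,-1,-1,-1,X]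

private lemma fin_six_five : (5 : Fin 6) = Fin.succ 4 := rfl
private lemma fin_five_four : (4 : Fin 5) = Fin.succ 3 := rfl
private lemma fin_four_three : (3 : Fin 4) = Fin.succ 2 := rfl
private lemma fin_three_two : (2 : Fin 3) = Fin.succ 1 := rfl
private lemma fin_two_one : (1 : Fin 2) = Fin.succ 0 := rfl

set_option maxHeartbeats 1000000 in
lemma theM6_charmatrix : theM6.charmatrix = theN6 := by
  apply Matrix.ext
  intro i j
  fin_cases i <;> fin_cases j <;>
    simp +decide [theM6, theN6, Matrix.charmatrix_apply, Matrix.diagonal, Matrix.cons_val_succ,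
      Fin.ext_iff, fin_six_five, fin_five_four, fin_four_three, fin_three_two, fin_two_one,
      Matrix.vecHead, Matrix.vecTail]

set_option maxHeartbeats 2000000 in
set_option maxRecDepth 8000 in
lemma theN6_det : theN6.det = (X^2 - 2*X - 1) * (X^2 + X - 1)^2 := by
  simp [theN6, Matrix.det_succ_row_zero, Fin.sum_univ_succ, Fin.succAbove,
    Fin.castSucc, Fin.castAdd, Fin.castLE]
  ring

lemma theM6_charpoly : theM6.charpoly = (X^2 - 2*X - 1) * (X^2 + X - 1)^2 := by
  rw [Matrix.charpoly, theM6_charmatrix, theN6_det]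

/-- The six nonzero proper "ideal patterns" in `(Bool × Bool) × Bool`. -/
def theV : Fin 6 → (Bool × Bool) × Bool :=
  ![((true,false),false), ((false,true),false), ((false,false),true),
    ((false,true),true), ((true,false),true), ((true,true),false)]

lemma theV_ne : ∀ i, theV i ≠ ⊥ ∧ theV i ≠ ⊤ := by decide

def theG (i : Fin 6) : {b : (Bool × Bool) × Bool // b ≠ ⊥ ∧ b ≠ ⊤} := ⟨theV i, theV_ne i⟩

lemma theG_bijective : Function.Bijective theG := by decide

lemma theG_adj : ∀ i j : Fin 6,
    ((theG i).1 ≠ (theG j).1 ∧ (theG i).1 ⊔ (theG j).1 = ⊤) ↔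
      (!![false,false,false,true,false,false; false,false,false,false,true,false;
         false,false,false,false,false,true; true,false,false,false,true,true;
         false,true,false,true,false,true; false,false,true,true,true,false] : Matrix (Fin 6) (Fin 6) Bool) i j = true := by
  intro i j
  fin_cases i <;> fin_cases j <;> decide

set_option maxHeartbeats 1000000 in
lemma theM6_entry : ∀ i j : Fin 6, theM6 i j =
    if (theG i).1 ≠ (theG j).1 ∧ (theG i).1 ⊔ (theG j).1 = ⊤ then (1:ℝ) else 0 := by
  intro i j
  rw [if_congr (theG_adj i j) rfl rfl]
  fin_cases i <;> fin_cases j <;>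
    simp +decide [theM6, Matrix.cons_val_succ,
      fin_six_five, fin_five_four, fin_four_three, fin_three_two, fin_two_one,
      Matrix.vecHead, Matrix.vecTail]

set_option maxHeartbeats 1000000 in
/-- For `n = p₁p₂p₃` a product of three distinct primes, the energy of the essential
ideal graph of `ZMod n` equals `2(√2 + √5)`. -/
theorem energy_essentialIdealGraph_three_primes (p₁ p₂ p₃ n : ℕ)
    (hp₁ : p₁.Prime) (hp₂ : p₂.Prime) (hp₃ : p₃.Prime)
    (h12 : p₁ ≠ p₂) (h13 : p₁ ≠ p₃) (h23 : p₂ ≠ p₃)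
    (hn : n = p₁ * p₂ * p₃) [NeZero n] :
    essEnergy n = 2 * (Real.sqrt 2 + Real.sqrt 5) := by
  subst hn
  classical
  haveI F1 : Fact p₁.Prime := ⟨hp₁⟩
  haveI F2 : Fact p₂.Prime := ⟨hp₂⟩
  haveI F3 : Fact p₃.Prime := ⟨hp₃⟩
  have hc12 : Nat.Coprime p₁ p₂ := (Nat.coprime_primes hp₁ hp₂).mpr h12
  have hc3 : Nat.Coprime (p₁ * p₂) p₃ :=
    Nat.Coprime.mul ((Nat.coprime_primes hp₁ hp₃).mpr h13) ((Nat.coprime_primes hp₂ hp₃).mpr h23)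
  let e : ZMod (p₁ * p₂ * p₃) ≃+* (ZMod p₁ × ZMod p₂) × ZMod p₃ :=
    (ZMod.chineseRemainder hc3).trans
      (RingEquiv.prodCongr (ZMod.chineseRemainder hc12) (RingEquiv.refl (ZMod p₃)))
  let L : Ideal (ZMod (p₁ * p₂ * p₃)) ≃o (Bool × Bool) × Bool :=
    (idealOrderIsoOfRingEquiv e).trans
      ((idealProdOrderIso _ _).trans
        (prodOrderIsoCongr
          ((idealProdOrderIso _ _).trans
            (prodOrderIsoCongr (idealFieldOrderIso (ZMod p₁)) (idealFieldOrderIso (ZMod p₂))))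
          (idealFieldOrderIso (ZMod p₃))))
  -- the vertex equivalence
  let φ : EssVert (p₁ * p₂ * p₃) ≃ {b : (Bool × Bool) × Bool // b ≠ ⊥ ∧ b ≠ ⊤} :=
  { toFun := fun I => ⟨L I.1,
      fun h => I.2.1 (L.injective (by rw [h, L.map_bot])),
      fun h => I.2.2 (L.injective (by rw [h, L.map_top]))⟩
    invFun := fun b => ⟨L.symm b.1,
      fun h => b.2.1 (by rw [← L.apply_symm_apply b.1, h, L.map_bot]),
      fun h => b.2.2 (by rw [← L.apply_symm_apply b.1, h, L.map_top])⟩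
    left_inv := fun I => Subtype.ext (L.symm_apply_apply I.1)
    right_inv := fun b => Subtype.ext (L.apply_symm_apply b.1) }
  let gE : Fin 6 ≃ {b : (Bool × Bool) × Bool // b ≠ ⊥ ∧ b ≠ ⊤} :=
    Equiv.ofBijective theG theG_bijective
  let ψ : EssVert (p₁ * p₂ * p₃) ≃ Fin 6 := φ.trans gE.symm
  have hψ : ∀ I, (theG (ψ I)).1 = L I.1 := by
    intro I
    have : theG (ψ I) = φ I := gE.apply_symm_apply (φ I)
    rw [this]
    rfl
  have key : essAdjMatrix (p₁ * p₂ * p₃) = Matrix.reindex ψ.symm ψ.symm theM6 := by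
    ext I K
    rw [Matrix.reindex_apply, Matrix.submatrix_apply, Equiv.symm_symm,
      theM6_entry (ψ I) (ψ K)]
    show (if (essentialIdealGraph _).Adj I K then (1:ℝ) else 0) = _
    refine if_congr ?_ rfl rfl
    rw [hψ I, hψ K]
    show (I ≠ K ∧ IsEssentialIdeal (I.1 ⊔ K.1)) ↔ _
    rw [isEssentialIdeal_iff_of_orderIso L]
    constructor
    · rintro ⟨h1, h2⟩
      refine ⟨fun h => h1 (Subtype.ext (L.injective h)), ?_⟩
      rw [← L.map_sup, h2, L.map_top]
    · rintro ⟨h1, h2⟩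
      refine ⟨fun h => h1 (by rw [h]), ?_⟩
      apply L.injective
      rw [L.map_sup, L.map_top]
      exact h2
  have hcp : (essAdjMatrix (p₁ * p₂ * p₃)).charpoly
      = ((X:ℝ[X])^2 - 2*X - 1) * ((X:ℝ[X])^2 + X - 1)^2 := by
    rw [key, Matrix.charpoly_reindex, theM6_charpoly]
  -- now the numerical part
  set a : ℝ := 1 + Real.sqrt 2 with ha
  set b : ℝ := 1 - Real.sqrt 2 with hb
  set r : ℝ := (-1 + Real.sqrt 5) / 2 with hr
  set s : ℝ := (-1 - Real.sqrt 5) / 2 with hs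
  have h2 : Real.sqrt 2 ^ 2 = 2 := Real.sq_sqrt (by norm_num)
  have h5 : Real.sqrt 5 ^ 2 = 5 := Real.sq_sqrt (by norm_num)
  have hq1 : ((X:ℝ[X])^2 - 2*X - 1) = (X - C a) * (X - C b) := by
    have hm : C a * C b = C (-1) := by
      rw [← map_mul]; congr 1; rw [ha, hb]; nlinarith [h2]
    have hp : C a + C b = C 2 := by
      rw [← map_add]; congr 1; rw [ha, hb]; ring
    calc ((X:ℝ[X])^2 - 2*X - 1) = X^2 - C 2 * X + C (-1) := by
            simp only [map_ofNat, map_neg, map_one]; ring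
      _ = X^2 - (C a + C b) * X + C a * C b := by rw [hm, hp]
      _ = (X - C a) * (X - C b) := by ring
  have hq2 : ((X:ℝ[X])^2 + X - 1) = (X - C r) * (X - C s) := by
    have hm : C r * C s = C (-1) := by
      rw [← map_mul]; congr 1; rw [hr, hs]; nlinarith [h5]
    have hp : C r + C s = C (-1) := by
      rw [← map_add]; congr 1; rw [hr, hs]; ring
    calc ((X:ℝ[X])^2 + X - 1) = X^2 - C (-1) * X + C (-1) := by
            simp only [map_neg, map_one]; ring
      _ = X^2 - (C r + C s) * X + C r * C s := by rw [hm, hp]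
      _ = (X - C r) * (X - C s) := by ring
  have hne : ∀ x : ℝ, (X - C x) ≠ 0 := fun x => Polynomial.X_sub_C_ne_zero x
  rw [essEnergy, hcp, hq1, hq2,
    Polynomial.roots_mul (mul_ne_zero (mul_ne_zero (hne a) (hne b))
      (pow_ne_zero 2 (mul_ne_zero (hne r) (hne s)))),
    Polynomial.roots_mul (mul_ne_zero (hne a) (hne b)),
    Polynomial.roots_pow,
    Polynomial.roots_mul (mul_ne_zero (hne r) (hne s)),
    Polynomial.roots_X_sub_C, Polynomial.roots_X_sub_C,
    Polynomial.roots_X_sub_C, Polynomial.roots_X_sub_C, two_smul]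
  simp only [Multiset.map_add, Multiset.sum_add, Multiset.map_singleton, Multiset.sum_singleton]
  have s2 : 1 < Real.sqrt 2 := by nlinarith [h2, Real.sqrt_nonneg 2]
  have s5 : 1 < Real.sqrt 5 := by nlinarith [h5, Real.sqrt_nonneg 5]
  have hA : |a| = a := abs_of_pos (by rw [ha]; linarith)
  have hB : |b| = -b := abs_of_neg (by rw [hb]; linarith)
  have hR : |r| = r := abs_of_pos (by rw [hr]; linarith)
  have hS : |s| = -s := abs_of_neg (by rw [hs]; linarith)
  rw [hA, hB, hR, hS, ha, hb, hr, hs]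
  ring
end Aux
end

section
/- Let n = p^m q^m, where p and q are distinct primes and m > 1. Then the Wiener index of the essential ideal graph E_{Z_n} equals (m⁴ + 4m³ + 3m² - 8m + 2)/2. -/
open Polynomial

/-- The Wiener index of the essential ideal graph of `ZMod n`: the sum of the distances
between all unordered pairs of distinct vertices (i.e. half the sum over ordered pairs). -/
noncomputable def essWiener (n : ℕ) [NeZero n] : ℚ :=
  (∑ u : EssVert n, ∑ v : EssVert n,
    ((essentialIdealGraph (ZMod n)).dist u v : ℚ)) / 2

/-- The hyper-Wiener index of the essential ideal graph of `ZMod n`: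
`WW = W/2 + (1/2) Σ_{pairs} d(u,v)²`. -/
noncomputable def essHyperWiener (n : ℕ) [NeZero n] : ℚ :=
  essWiener n / 2 + (∑ u : EssVert n, ∑ v : EssVert n,
    ((essentialIdealGraph (ZMod n)).dist u v : ℚ) ^ 2) / 4


namespace EssAux

open Ideal

/-- The ideal of `ZMod n` generated by the image of `d : ℕ`. -/
def dId (n d : ℕ) : Ideal (ZMod n) := Ideal.span {(d : ZMod n)}

variable {n : ℕ} [NeZero n]

instance : IsPrincipalIdealRing (ZMod n) :=
  IsPrincipalIdealRing.of_surjective (Int.castRingHom (ZMod n)) ZMod.intCast_surjective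

theorem mem_dId {d : ℕ} (hd : d ∣ n) (x : ZMod n) : x ∈ dId n d ↔ d ∣ x.val := by
  constructor
  · intro hx
    obtain ⟨c, rfl⟩ := Ideal.mem_span_singleton'.mp hx
    set x := c * (d : ZMod n) with hxdef
    have h1 : ((c.val * d - (x.val : ℤ) : ℤ) : ZMod n) = 0 := by
      push_cast
      rw [ZMod.natCast_zmod_val, ZMod.natCast_zmod_val, hxdef]
      ring
    rw [ZMod.intCast_zmod_eq_zero_iff_dvd] at h1
    have hdn : (d : ℤ) ∣ (n : ℤ) := Int.natCast_dvd_natCast.mpr hd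
    have : (d : ℤ) ∣ (x.val : ℤ) := by
      have h2 : (d:ℤ) ∣ (c.val * d - (x.val:ℤ)) := hdn.trans h1
      have h3 : (d:ℤ) ∣ ((c.val : ℤ) * d) := dvd_mul_left _ _
      simpa using dvd_sub h3 h2
    exact_mod_cast this
  · rintro ⟨k, hk⟩
    have : x = ((d * k : ℕ) : ZMod n) := by rw [← hk, ZMod.natCast_zmod_val]
    rw [this]
    push_cast
    exact Ideal.mem_span_singleton'.mpr ⟨k, by ring⟩

theorem dId_le {d e : ℕ} (hd : d ∣ n) (he : e ∣ n) : dId n d ≤ dId n e ↔ e ∣ d := by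
  constructor
  · intro h
    have hmem : (d : ZMod n) ∈ dId n e := h (Ideal.subset_span rfl)
    rw [mem_dId he, ZMod.val_natCast, Nat.dvd_mod_iff he] at hmem
    exact hmem
  · intro h
    rw [dId, Ideal.span_le, Set.singleton_subset_iff, SetLike.mem_coe, mem_dId he,
      ZMod.val_natCast, Nat.dvd_mod_iff he]
    exact h

theorem dId_inj {d e : ℕ} (hd : d ∣ n) (he : e ∣ n) (h : dId n d = dId n e) : d = e :=
  Nat.dvd_antisymm ((dId_le he hd).mp h.ge) ((dId_le hd he).mp h.le)

theorem dId_eq_bot {d : ℕ} (hd : d ∣ n) : dId n d = ⊥ ↔ d = n := by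
  rw [dId, Ideal.span_singleton_eq_bot, ZMod.natCast_eq_zero_iff]
  exact ⟨fun h => Nat.dvd_antisymm hd h, fun h => h ▸ dvd_rfl⟩

theorem dId_eq_top {d : ℕ} (hn1 : 1 < n) (hd : d ∣ n) : dId n d = ⊤ ↔ d = 1 := by
  constructor
  · intro h
    have h1 : (1 : ZMod n) ∈ dId n d := h ▸ Submodule.mem_top
    rw [mem_dId hd, ZMod.val_one_eq_one_mod, Nat.mod_eq_of_lt hn1] at h1
    exact Nat.dvd_one.mp h1
  · rintro rfl
    simp [dId, Ideal.span_singleton_one]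

theorem exists_dId (I : Ideal (ZMod n)) : ∃ d, d ∣ n ∧ I = dId n d := by
  obtain ⟨x, rfl⟩ := Submodule.IsPrincipal.principal I
  refine ⟨Nat.gcd x.val n, Nat.gcd_dvd_right _ _, le_antisymm ?_ ?_⟩
  · refine Submodule.span_le.mpr (Set.singleton_subset_iff.mpr (SetLike.mem_coe.mpr ?_))
    rw [mem_dId (Nat.gcd_dvd_right _ _)]
    exact Nat.gcd_dvd_left _ _
  · have key : ((Nat.gcd x.val n : ℕ) : ZMod n) = x * ((Nat.gcdA x.val n : ℤ) : ZMod n) := by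
      calc ((Nat.gcd x.val n : ℕ) : ZMod n)
          = (((x.val : ℤ) * Nat.gcdA x.val n + (n : ℤ) * Nat.gcdB x.val n : ℤ) : ZMod n) := by
            rw [← Nat.gcd_eq_gcd_ab]; push_cast; ring
        _ = x * ((Nat.gcdA x.val n : ℤ) : ZMod n) := by
            push_cast [ZMod.natCast_zmod_val, ZMod.natCast_self]; ring
    rw [dId, Ideal.span_le, Set.singleton_subset_iff, SetLike.mem_coe, key]
    exact Ideal.mem_span_singleton'.mpr ⟨_, mul_comm _ _⟩

theorem dId_sup {d e : ℕ} (hd : d ∣ n) (he : e ∣ n) :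
    dId n d ⊔ dId n e = dId n (Nat.gcd d e) := by
  have hg : Nat.gcd d e ∣ n := (Nat.gcd_dvd_left d e).trans hd
  refine le_antisymm (sup_le ((dId_le hd hg).mpr (Nat.gcd_dvd_left _ _))
    ((dId_le he hg).mpr (Nat.gcd_dvd_right _ _))) ?_
  rw [dId, Ideal.span_le, Set.singleton_subset_iff, SetLike.mem_coe]
  have key := Nat.gcd_eq_gcd_ab d e
  have hmem : ((Nat.gcd d e : ℕ) : ZMod n) =
      ((Nat.gcdA d e : ℤ) : ZMod n) * (d : ZMod n) +
      ((Nat.gcdB d e : ℤ) : ZMod n) * (e : ZMod n) := by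
    have := congrArg (fun z : ℤ => ((z : ZMod n) : ZMod n)) key
    push_cast at this ⊢
    rw [this]; ring
  have : (d : ZMod n) ∈ dId n d ⊔ dId n e :=
    Submodule.mem_sup_left (Ideal.subset_span rfl)
  have he' : (e : ZMod n) ∈ dId n d ⊔ dId n e :=
    Submodule.mem_sup_right (Ideal.subset_span rfl)
  rw [hmem]
  exact add_mem (Ideal.mul_mem_left _ _ this) (Ideal.mul_mem_left _ _ he')

theorem dId_inf {d e : ℕ} (hd : d ∣ n) (he : e ∣ n) :
    dId n d ⊓ dId n e = dId n (Nat.lcm d e) := by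
  have hl : Nat.lcm d e ∣ n := Nat.lcm_dvd hd he
  ext x
  rw [Submodule.mem_inf, mem_dId hd, mem_dId he, mem_dId hl]
  exact ⟨fun ⟨h1, h2⟩ => Nat.lcm_dvd h1 h2,
    fun h => ⟨(Nat.dvd_lcm_left d e).trans h, (Nat.dvd_lcm_right d e).trans h⟩⟩


theorem isEssential_dId_iff {d : ℕ} (hd : d ∣ n) :
    IsEssentialIdeal (dId n d) ↔ ∀ e, e ∣ n → e ≠ n → Nat.lcm d e ≠ n := by
  constructor
  · intro h e he hen hlcm
    have hbot : dId n d ⊓ dId n e = ⊥ := by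
      rw [dId_inf hd he, hlcm]
      exact (dId_eq_bot dvd_rfl).mpr rfl
    exact h (dId n e) (fun hb => hen ((dId_eq_bot he).mp hb)) hbot
  · intro h J hJ hbot
    obtain ⟨e, he, rfl⟩ := exists_dId J
    have hen : e ≠ n := fun he' => hJ ((dId_eq_bot he).mpr he')
    rw [dId_inf hd he] at hbot
    exact h e he hen ((dId_eq_bot (Nat.lcm_dvd hd he)).mp hbot)

section PQ

variable {p q m : ℕ} (hp : p.Prime) (hq : q.Prime) (hpq : p ≠ q) (hm : 1 < m)
  (hn : n = p ^ m * q ^ m)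

omit [NeZero n] in
theorem pm_dvd_or_of_dvd_lcm {p m a b : ℕ} (hp : p.Prime) (ha : a ≠ 0) (hb : b ≠ 0)
    (h : p ^ m ∣ Nat.lcm a b) : p ^ m ∣ a ∨ p ^ m ∣ b := by
  rw [hp.pow_dvd_iff_le_factorization (Nat.lcm_ne_zero ha hb),
    Nat.factorization_lcm ha hb, Finsupp.sup_apply, le_sup_iff] at h
  rcases h with h | h
  · exact Or.inl ((hp.pow_dvd_iff_le_factorization ha).mpr h)
  · exact Or.inr ((hp.pow_dvd_iff_le_factorization hb).mpr h)

include hp hq hpq hm hn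

theorem isEssential_dId_iff_pows {d : ℕ} (hd : d ∣ n) :
    IsEssentialIdeal (dId n d) ↔ ¬(p ^ m ∣ d) ∧ ¬(q ^ m ∣ d) := by
  have hn0 : n ≠ 0 := NeZero.ne n
  have hd0 : d ≠ 0 := fun h => hn0 (Nat.eq_zero_of_zero_dvd (h ▸ hd))
  have hcpq : Nat.Coprime p q := (Nat.coprime_primes hp hq).mpr hpq
  have hcop : Nat.Coprime (p ^ m) (q ^ m) := Nat.Coprime.pow _ _ hcpq
  have hp1 : 1 < p ^ m := Nat.one_lt_pow (by omega) hp.one_lt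
  have hq1 : 1 < q ^ m := Nat.one_lt_pow (by omega) hq.one_lt
  rw [isEssential_dId_iff hd]
  constructor
  · intro h
    constructor
    · intro hpd
      refine h (q ^ m) ⟨p ^ m, by rw [hn]; ring⟩ (fun hqn => ?_) ?_
      · rw [hn] at hqn; nlinarith [hqn, hp1, hq1]
      · refine Nat.dvd_antisymm (Nat.lcm_dvd hd ⟨p ^ m, by rw [hn]; ring⟩) ?_
        rw [hn]
        exact Nat.Coprime.mul_dvd_of_dvd_of_dvd hcop
          (hpd.trans (Nat.dvd_lcm_left _ _)) (Nat.dvd_lcm_right _ _)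
    · intro hqd
      refine h (p ^ m) ⟨q ^ m, hn⟩ (fun hpn => ?_) ?_
      · rw [hn] at hpn; nlinarith [hpn, hp1, hq1]
      · refine Nat.dvd_antisymm (Nat.lcm_dvd hd ⟨q ^ m, hn⟩) ?_
        rw [hn]
        exact Nat.Coprime.mul_dvd_of_dvd_of_dvd hcop
          (Nat.dvd_lcm_right _ _) (hqd.trans (Nat.dvd_lcm_left _ _))
  · rintro ⟨hpd, hqd⟩ e he hen hlcm
    have he0 : e ≠ 0 := fun h => hn0 (Nat.eq_zero_of_zero_dvd (h ▸ he))
    have hpe : p ^ m ∣ e := by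
      have hdd : p ^ m ∣ Nat.lcm d e := by rw [hlcm]; exact ⟨q ^ m, hn⟩
      rcases pm_dvd_or_of_dvd_lcm hp hd0 he0 hdd with h | h
      · exact absurd h hpd
      · exact h
    have hqe : q ^ m ∣ e := by
      have hdd : q ^ m ∣ Nat.lcm d e := by rw [hlcm]; exact ⟨p ^ m, by rw [hn]; ring⟩
      rcases pm_dvd_or_of_dvd_lcm hq hd0 he0 hdd with h | h
      · exact absurd h hqd
      · exact h
    exact hen (Nat.dvd_antisymm he (hn ▸ Nat.Coprime.mul_dvd_of_dvd_of_dvd hcop hpe hqe))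

omit [NeZero n] hp hq hpq hm hn in
theorem nat_dvd_gcd_iff {k a b : ℕ} : k ∣ Nat.gcd a b ↔ k ∣ a ∧ k ∣ b :=
  ⟨fun h => ⟨h.trans (Nat.gcd_dvd_left _ _), h.trans (Nat.gcd_dvd_right _ _)⟩,
    fun ⟨u, v⟩ => Nat.dvd_gcd u v⟩

theorem F_factor_p {a b : ℕ} : (p ^ a * q ^ b).factorization p = a := by
  rw [Nat.factorization_mul (pow_ne_zero _ hp.pos.ne') (pow_ne_zero _ hq.pos.ne'),
    Finsupp.add_apply, hp.factorization_pow, hq.factorization_pow,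
    Finsupp.single_eq_same, Finsupp.single_eq_of_ne' hpq.symm]
  omega

theorem F_factor_q {a b : ℕ} : (p ^ a * q ^ b).factorization q = b := by
  rw [Nat.factorization_mul (pow_ne_zero _ hp.pos.ne') (pow_ne_zero _ hq.pos.ne'),
    Finsupp.add_apply, hp.factorization_pow, hq.factorization_pow,
    Finsupp.single_eq_same, Finsupp.single_eq_of_ne' hpq]
  omega

theorem F_inj {a b a' b' : ℕ} (h : p ^ a * q ^ b = p ^ a' * q ^ b') : a = a' ∧ b = b' := by
  constructor
  · have := congrArg (fun z : ℕ => z.factorization p) h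
    simpa [F_factor_p hp hq hpq hm hn] using this
  · have := congrArg (fun z : ℕ => z.factorization q) h
    simpa [F_factor_q hp hq hpq hm hn] using this

theorem pm_dvd_F {a b : ℕ} : p ^ m ∣ p ^ a * q ^ b ↔ m ≤ a := by
  have hcop : Nat.Coprime (p ^ m) (q ^ b) :=
    Nat.Coprime.pow _ _ ((Nat.coprime_primes hp hq).mpr hpq)
  rw [Nat.Coprime.dvd_mul_right hcop, Nat.pow_dvd_pow_iff_le_right hp.one_lt]

theorem qm_dvd_F {a b : ℕ} : q ^ m ∣ p ^ a * q ^ b ↔ m ≤ b := by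
  have hcop : Nat.Coprime (q ^ m) (p ^ a) :=
    Nat.Coprime.pow _ _ ((Nat.coprime_primes hq hp).mpr hpq.symm)
  rw [mul_comm, Nat.Coprime.dvd_mul_right hcop, Nat.pow_dvd_pow_iff_le_right hq.one_lt]

theorem F_dvd_n {a b : ℕ} (ha : a ≤ m) (hb : b ≤ m) : p ^ a * q ^ b ∣ n :=
  hn ▸ mul_dvd_mul (pow_dvd_pow p ha) (pow_dvd_pow q hb)

theorem F_eq_n_iff {a b : ℕ} : p ^ a * q ^ b = n ↔ a = m ∧ b = m := by
  rw [hn]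
  constructor
  · exact F_inj hp hq hpq hm hn
  · rintro ⟨rfl, rfl⟩; rfl

theorem F_eq_one_iff {a b : ℕ} : p ^ a * q ^ b = 1 ↔ a = 0 ∧ b = 0 := by
  constructor
  · intro h
    have h1 : p ^ a = 1 := Nat.eq_one_of_mul_eq_one_right h
    have h2 : q ^ b = 1 := Nat.eq_one_of_mul_eq_one_left h
    constructor
    · by_contra ha
      exact absurd h1 (Nat.one_lt_pow ha hp.one_lt).ne'
    · by_contra hb
      exact absurd h2 (Nat.one_lt_pow hb hq.one_lt).ne'
  · rintro ⟨rfl, rfl⟩; simp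

theorem dvd_n_form {d : ℕ} (hd : d ∣ n) :
    ∃ a b, a ≤ m ∧ b ≤ m ∧ d = p ^ a * q ^ b := by
  rw [hn] at hd
  obtain ⟨y, z, hy, hz, hyz⟩ := Nat.dvd_mul.mp hd
  obtain ⟨a, ham, rfl⟩ := (Nat.dvd_prime_pow hp).mp hy
  obtain ⟨b, hbm, rfl⟩ := (Nat.dvd_prime_pow hq).mp hz
  exact ⟨a, b, ham, hbm, hyz.symm⟩

theorem one_lt_n : 1 < n := by
  have hp1 : 1 < p ^ m := Nat.one_lt_pow (by omega) hp.one_lt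
  have hq1 : 1 < q ^ m := Nat.one_lt_pow (by omega) hq.one_lt
  rw [hn]; nlinarith

end PQ

/-- The combinatorial vertex type: exponent pairs. -/
def Vt (m : ℕ) : Type :=
  {x : Fin (m + 1) × Fin (m + 1) // (x.1.val ≠ 0 ∨ x.2.val ≠ 0) ∧ (x.1.val ≠ m ∨ x.2.val ≠ m)}

instance (m : ℕ) : Fintype (Vt m) := by unfold Vt; infer_instance
instance (m : ℕ) : DecidableEq (Vt m) := by unfold Vt; infer_instance

def vmap (p q m n : ℕ) [NeZero n] (hp : p.Prime) (hq : q.Prime) (hpq : p ≠ q)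
    (hm : 1 < m) (hn : n = p ^ m * q ^ m) (x : Vt m) : EssVert n :=
  ⟨dId n (p ^ (x.1.1 : ℕ) * q ^ (x.1.2 : ℕ)),
    by
      have hd : p ^ (x.1.1 : ℕ) * q ^ (x.1.2 : ℕ) ∣ n :=
        F_dvd_n hp hq hpq hm hn (by omega) (by omega)
      rw [Ne, dId_eq_bot hd, F_eq_n_iff hp hq hpq hm hn]
      have := x.2.2
      omega,
    by
      have hd : p ^ (x.1.1 : ℕ) * q ^ (x.1.2 : ℕ) ∣ n :=
        F_dvd_n hp hq hpq hm hn (by omega) (by omega)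
      rw [Ne, dId_eq_top (one_lt_n hp hq hpq hm hn) hd, F_eq_one_iff hp hq hpq hm hn]
      have := x.2.1
      omega⟩

section PQ2

variable {p q m : ℕ} (hp : p.Prime) (hq : q.Prime) (hpq : p ≠ q) (hm : 1 < m)
  (hn : n = p ^ m * q ^ m)

include hp hq hpq hm hn

theorem vmap_inj : Function.Injective (vmap p q m n hp hq hpq hm hn) := by
  intro x y h
  have h1 : dId n (p ^ (x.1.1 : ℕ) * q ^ (x.1.2 : ℕ))
      = dId n (p ^ (y.1.1 : ℕ) * q ^ (y.1.2 : ℕ)) := congrArg Subtype.val h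
  have h2 := dId_inj (F_dvd_n hp hq hpq hm hn (by omega) (by omega))
    (F_dvd_n hp hq hpq hm hn (by omega) (by omega)) h1
  obtain ⟨ha, hb⟩ := F_inj hp hq hpq hm hn h2
  exact Subtype.ext (Prod.ext (Fin.ext ha) (Fin.ext hb))

theorem vmap_surj : Function.Surjective (vmap p q m n hp hq hpq hm hn) := by
  rintro ⟨I, hIb, hIt⟩
  obtain ⟨d, hd, rfl⟩ := exists_dId I
  obtain ⟨a, b, ham, hbm, rfl⟩ := dvd_n_form hp hq hpq hm hn hd
  have hne_n : ¬(a = m ∧ b = m) := by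
    intro ⟨ha, hb⟩
    exact hIb ((dId_eq_bot hd).mpr ((F_eq_n_iff hp hq hpq hm hn).mpr ⟨ha, hb⟩))
  have hne_1 : ¬(a = 0 ∧ b = 0) := by
    intro ⟨ha, hb⟩
    exact hIt ((dId_eq_top (one_lt_n hp hq hpq hm hn) hd).mpr
      ((F_eq_one_iff hp hq hpq hm hn).mpr ⟨ha, hb⟩))
  exact ⟨⟨(⟨a, by omega⟩, ⟨b, by omega⟩), ⟨by simpa using (by omega), by simpa using (by omega)⟩⟩,
    Subtype.ext rfl⟩

theorem vmap_adj (x y : Vt m) :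
    (essentialIdealGraph (ZMod n)).Adj (vmap p q m n hp hq hpq hm hn x)
      (vmap p q m n hp hq hpq hm hn y) ↔
    x ≠ y ∧ ¬((x.1.1 : ℕ) = m ∧ (y.1.1 : ℕ) = m) ∧ ¬((x.1.2 : ℕ) = m ∧ (y.1.2 : ℕ) = m) := by
  have hdx : p ^ (x.1.1 : ℕ) * q ^ (x.1.2 : ℕ) ∣ n :=
    F_dvd_n hp hq hpq hm hn (by omega) (by omega)
  have hdy : p ^ (y.1.1 : ℕ) * q ^ (y.1.2 : ℕ) ∣ n :=
    F_dvd_n hp hq hpq hm hn (by omega) (by omega)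
  have hdg : Nat.gcd (p ^ (x.1.1 : ℕ) * q ^ (x.1.2 : ℕ)) (p ^ (y.1.1 : ℕ) * q ^ (y.1.2 : ℕ)) ∣ n :=
    (Nat.gcd_dvd_left _ _).trans hdx
  have h1 : vmap p q m n hp hq hpq hm hn x ≠ vmap p q m n hp hq hpq hm hn y ↔ x ≠ y :=
    (vmap_inj hp hq hpq hm hn).ne_iff
  have h2 : (vmap p q m n hp hq hpq hm hn x).1 ⊔ (vmap p q m n hp hq hpq hm hn y).1
      = dId n (Nat.gcd (p ^ (x.1.1 : ℕ) * q ^ (x.1.2 : ℕ))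
          (p ^ (y.1.1 : ℕ) * q ^ (y.1.2 : ℕ))) := dId_sup hdx hdy
  show (_ ≠ _ ∧ IsEssentialIdeal (R := ZMod n) _) ↔ _
  rw [h2, isEssential_dId_iff_pows hp hq hpq hm hn hdg, h1]
  have hx1 := x.1.1.isLt
  have hx2 := x.1.2.isLt
  have hy1 := y.1.1.isLt
  have hy2 := y.1.2.isLt
  constructor
  · rintro ⟨hne, hP, hQ⟩
    refine ⟨hne, fun ⟨hxm, hym⟩ => hP ?_, fun ⟨hxm, hym⟩ => hQ ?_⟩
    · exact nat_dvd_gcd_iff.mpr ⟨(pm_dvd_F hp hq hpq hm hn).mpr (by omega),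
        (pm_dvd_F hp hq hpq hm hn).mpr (by omega)⟩
    · exact nat_dvd_gcd_iff.mpr ⟨(qm_dvd_F hp hq hpq hm hn).mpr (by omega),
        (qm_dvd_F hp hq hpq hm hn).mpr (by omega)⟩
  · rintro ⟨hne, hA, hB⟩
    refine ⟨hne, fun hdvd => ?_, fun hdvd => ?_⟩
    · obtain ⟨u, v⟩ := nat_dvd_gcd_iff.mp hdvd
      rw [pm_dvd_F hp hq hpq hm hn] at u v
      exact hA ⟨by omega, by omega⟩
    · obtain ⟨u, v⟩ := nat_dvd_gcd_iff.mp hdvd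
      rw [qm_dvd_F hp hq hpq hm hn] at u v
      exact hB ⟨by omega, by omega⟩

theorem vmap_dist (x y : Vt m) :
    (essentialIdealGraph (ZMod n)).dist (vmap p q m n hp hq hpq hm hn x)
      (vmap p q m n hp hq hpq hm hn y) =
    if x = y then 0 else
      if ((x.1.1 : ℕ) = m ∧ (y.1.1 : ℕ) = m) ∨ ((x.1.2 : ℕ) = m ∧ (y.1.2 : ℕ) = m) then 2
      else 1 := by
  by_cases hxy : x = y
  · subst hxy; simp [SimpleGraph.dist_self]
  · rw [if_neg hxy]
    by_cases hbad : ((x.1.1 : ℕ) = m ∧ (y.1.1 : ℕ) = m) ∨ ((x.1.2 : ℕ) = m ∧ (y.1.2 : ℕ) = m)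
    · rw [if_pos hbad]
      have hnadj : ¬ (essentialIdealGraph (ZMod n)).Adj (vmap p q m n hp hq hpq hm hn x)
          (vmap p q m n hp hq hpq hm hn y) := by
        rw [vmap_adj hp hq hpq hm hn]
        rintro ⟨-, hA, hB⟩
        tauto
      have hxcoord : (x.1.1 : ℕ) = m ∨ (x.1.2 : ℕ) = m := by tauto
      have hycoord : (y.1.1 : ℕ) = m ∨ (y.1.2 : ℕ) = m := by tauto
      have hmlt : (1 : ℕ) < m + 1 := by omega
      have hne1m : (1 : ℕ) ≠ m := by omega
      set w : Vt m := ⟨(⟨1, hmlt⟩, ⟨1, hmlt⟩), ⟨Or.inl one_ne_zero, Or.inl hne1m⟩⟩ with hw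
      have hw1 : (w.1.1 : ℕ) = 1 := rfl
      have hw2 : (w.1.2 : ℕ) = 1 := rfl
      have hwx : (essentialIdealGraph (ZMod n)).Adj (vmap p q m n hp hq hpq hm hn x)
          (vmap p q m n hp hq hpq hm hn w) := by
        rw [vmap_adj hp hq hpq hm hn]
        refine ⟨fun h => ?_, fun ⟨_, h⟩ => by omega, fun ⟨_, h⟩ => by omega⟩
        rw [h] at hxcoord
        omega
      have hwy : (essentialIdealGraph (ZMod n)).Adj (vmap p q m n hp hq hpq hm hn w)
          (vmap p q m n hp hq hpq hm hn y) := by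
        rw [vmap_adj hp hq hpq hm hn]
        refine ⟨fun h => ?_, fun ⟨h, _⟩ => by omega, fun ⟨h, _⟩ => by omega⟩
        rw [← h] at hycoord
        omega
      have wlk : (essentialIdealGraph (ZMod n)).Walk (vmap p q m n hp hq hpq hm hn x)
          (vmap p q m n hp hq hpq hm hn y) := SimpleGraph.Walk.cons hwx (hwy.toWalk)
      have hle : (essentialIdealGraph (ZMod n)).dist (vmap p q m n hp hq hpq hm hn x)
          (vmap p q m n hp hq hpq hm hn y) ≤ 2 :=
        SimpleGraph.dist_le (SimpleGraph.Walk.cons hwx hwy.toWalk)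
      have hne' : vmap p q m n hp hq hpq hm hn x ≠ vmap p q m n hp hq hpq hm hn y :=
        (vmap_inj hp hq hpq hm hn).ne hxy
      have h0 : 0 < (essentialIdealGraph (ZMod n)).dist (vmap p q m n hp hq hpq hm hn x)
          (vmap p q m n hp hq hpq hm hn y) :=
        SimpleGraph.Reachable.pos_dist_of_ne wlk.reachable hne'
      have h1 : (essentialIdealGraph (ZMod n)).dist (vmap p q m n hp hq hpq hm hn x)
          (vmap p q m n hp hq hpq hm hn y) ≠ 1 :=
        fun h => hnadj (SimpleGraph.dist_eq_one_iff_adj.mp h)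
      omega
    · rw [if_neg hbad]
      apply SimpleGraph.dist_eq_one_iff_adj.mpr
      rw [vmap_adj hp hq hpq hm hn]
      exact ⟨hxy, by tauto, by tauto⟩

end PQ2

section Counting

variable {m : ℕ}

theorem sum_ind_eq' (c : ℕ) (hc : c < m + 1) :
    ∑ z : Fin (m + 1), (if (z : ℕ) = c then (1 : ℚ) else 0) = 1 := by
  have h : ∀ z : Fin (m + 1), ((z : ℕ) = c) = (z = ⟨c, hc⟩) := fun z => by
    simp [Fin.ext_iff]
  simp_rw [h]
  simp

theorem sum_ind_ne' (c : ℕ) (hc : c < m + 1) :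
    ∑ z : Fin (m + 1), (if (z : ℕ) ≠ c then (1 : ℚ) else 0) = m := by
  have h : ∀ z : Fin (m + 1), (if (z : ℕ) ≠ c then (1 : ℚ) else 0)
      = 1 - (if (z : ℕ) = c then 1 else 0) := by
    intro z; split_ifs <;> simp_all
  rw [Finset.sum_congr rfl (fun z _ => h z), Finset.sum_sub_distrib, sum_ind_eq' c hc,
    Finset.sum_const, Finset.card_univ, Fintype.card_fin]
  push_cast
  ring

theorem sum_prod_ind (f g : Fin (m + 1) → ℚ) :
    ∑ z : Fin (m + 1) × Fin (m + 1), f z.1 * g z.2 = (∑ a, f a) * (∑ b, g b) := by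
  rw [Fintype.sum_prod_type, ← Finset.sum_mul_sum]

theorem sum_vt_eq (f : Fin (m + 1) × Fin (m + 1) → ℚ) :
    ∑ x : Vt m, f x.1 =
      ∑ z : Fin (m + 1) × Fin (m + 1),
        if ((z.1 : ℕ) ≠ 0 ∨ (z.2 : ℕ) ≠ 0) ∧ ((z.1 : ℕ) ≠ m ∨ (z.2 : ℕ) ≠ m) then f z else 0 := by
  classical
  rw [← Finset.sum_filter]
  exact (Finset.sum_subtype _ (fun x => by simp) f).symm

theorem Nq (hm : 1 < m) : ∑ x : Vt m, (1 : ℚ) = (m : ℚ) ^ 2 + 2 * m - 1 := by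
  rw [sum_vt_eq (fun _ => (1 : ℚ))]
  have key : ∀ z ∈ (Finset.univ : Finset (Fin (m + 1) × Fin (m + 1))),
      (if ((z.1 : ℕ) ≠ 0 ∨ (z.2 : ℕ) ≠ 0) ∧ ((z.1 : ℕ) ≠ m ∨ (z.2 : ℕ) ≠ m) then (1 : ℚ) else 0) =
      1 - (if (z.1 : ℕ) = 0 then (1 : ℚ) else 0) * (if (z.2 : ℕ) = 0 then (1 : ℚ) else 0)
        - (if (z.1 : ℕ) = m then (1 : ℚ) else 0) * (if (z.2 : ℕ) = m then (1 : ℚ) else 0) := by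
    intro z _
    split_ifs <;> norm_num <;> omega
  rw [Finset.sum_congr rfl key, Finset.sum_sub_distrib, Finset.sum_sub_distrib,
    sum_prod_ind (fun a => if (a : ℕ) = 0 then (1 : ℚ) else 0)
      (fun b => if (b : ℕ) = 0 then (1 : ℚ) else 0),
    sum_prod_ind (fun a => if (a : ℕ) = m then (1 : ℚ) else 0)
      (fun b => if (b : ℕ) = m then (1 : ℚ) else 0),
    sum_ind_eq' 0 (by omega), sum_ind_eq' m (by omega),
    Finset.sum_const, Finset.card_univ, Fintype.card_prod, Fintype.card_fin]
  push_cast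
  ring

theorem alphaq (hm : 1 < m) :
    ∑ x : Vt m, (if (x.1.1 : ℕ) = m then (1 : ℚ) else 0) = m := by
  rw [sum_vt_eq (fun z => if (z.1 : ℕ) = m then (1 : ℚ) else 0)]
  have key : ∀ z ∈ (Finset.univ : Finset (Fin (m + 1) × Fin (m + 1))),
      (if ((z.1 : ℕ) ≠ 0 ∨ (z.2 : ℕ) ≠ 0) ∧ ((z.1 : ℕ) ≠ m ∨ (z.2 : ℕ) ≠ m) then
        (if (z.1 : ℕ) = m then (1 : ℚ) else 0) else 0) =
      (if (z.1 : ℕ) = m then (1 : ℚ) else 0) * (if (z.2 : ℕ) ≠ m then (1 : ℚ) else 0) := by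
    intro z _
    split_ifs <;> norm_num <;> omega
  rw [Finset.sum_congr rfl key,
    sum_prod_ind (fun a => if (a : ℕ) = m then (1 : ℚ) else 0)
      (fun b => if (b : ℕ) ≠ m then (1 : ℚ) else 0),
    sum_ind_eq' m (by omega), sum_ind_ne' m (by omega), one_mul]

theorem betaq (hm : 1 < m) :
    ∑ x : Vt m, (if (x.1.2 : ℕ) = m then (1 : ℚ) else 0) = m := by
  rw [sum_vt_eq (fun z => if (z.2 : ℕ) = m then (1 : ℚ) else 0)]
  have key : ∀ z ∈ (Finset.univ : Finset (Fin (m + 1) × Fin (m + 1))),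
      (if ((z.1 : ℕ) ≠ 0 ∨ (z.2 : ℕ) ≠ 0) ∧ ((z.1 : ℕ) ≠ m ∨ (z.2 : ℕ) ≠ m) then
        (if (z.2 : ℕ) = m then (1 : ℚ) else 0) else 0) =
      (if (z.1 : ℕ) ≠ m then (1 : ℚ) else 0) * (if (z.2 : ℕ) = m then (1 : ℚ) else 0) := by
    intro z _
    split_ifs <;> norm_num <;> omega
  rw [Finset.sum_congr rfl key,
    sum_prod_ind (fun a => if (a : ℕ) ≠ m then (1 : ℚ) else 0)
      (fun b => if (b : ℕ) = m then (1 : ℚ) else 0),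
    sum_ind_ne' m (by omega), sum_ind_eq' m (by omega), mul_one]

end Counting

section Final

variable {p q m : ℕ} (hp : p.Prime) (hq : q.Prime) (hpq : p ≠ q) (hm : 1 < m)
  (hn : n = p ^ m * q ^ m)

include hp hq hpq hm hn

theorem ess_sum :
    ∑ u : EssVert n, ∑ v : EssVert n, ((essentialIdealGraph (ZMod n)).dist u v : ℚ)
      = ((m : ℚ) ^ 2 + 2 * m - 1) * (((m : ℚ) ^ 2 + 2 * m - 1) - 1)
        + ((m : ℚ) * m - m) + ((m : ℚ) * m - m) := by
  classical
  have hbij : Function.Bijective (vmap p q m n hp hq hpq hm hn) :=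
    ⟨vmap_inj hp hq hpq hm hn, vmap_surj hp hq hpq hm hn⟩
  let e : Vt m ≃ EssVert n := Equiv.ofBijective _ hbij
  have h1 : (∑ u : EssVert n, ∑ v : EssVert n, ((essentialIdealGraph (ZMod n)).dist u v : ℚ))
      = ∑ x : Vt m, ∑ y : Vt m, ((essentialIdealGraph (ZMod n)).dist
          (vmap p q m n hp hq hpq hm hn x) (vmap p q m n hp hq hpq hm hn y) : ℚ) := by
    rw [← Equiv.sum_comp e
      (fun u => ∑ v : EssVert n, ((essentialIdealGraph (ZMod n)).dist u v : ℚ))]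
    refine Finset.sum_congr rfl fun x _ => ?_
    rw [← Equiv.sum_comp e
      (fun v => ((essentialIdealGraph (ZMod n)).dist (e x) v : ℚ))]
    rfl
  rw [h1]
  have h2 : ∀ x y : Vt m, ((essentialIdealGraph (ZMod n)).dist
      (vmap p q m n hp hq hpq hm hn x) (vmap p q m n hp hq hpq hm hn y) : ℚ)
      = (1 - (if x = y then (1 : ℚ) else 0))
        + ((if (x.1.1 : ℕ) = m then (1 : ℚ) else 0) * (if (y.1.1 : ℕ) = m then (1 : ℚ) else 0)
            - (if x = y then (1 : ℚ) else 0) * (if (x.1.1 : ℕ) = m then (1 : ℚ) else 0))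
        + ((if (x.1.2 : ℕ) = m then (1 : ℚ) else 0) * (if (y.1.2 : ℕ) = m then (1 : ℚ) else 0)
            - (if x = y then (1 : ℚ) else 0) * (if (x.1.2 : ℕ) = m then (1 : ℚ) else 0)) := by
    intro x y
    rw [vmap_dist hp hq hpq hm hn]
    have hx := x.2.2
    by_cases hxy : x = y
    · subst hxy
      simp only [if_pos rfl]
      split_ifs <;> norm_num
    · simp only [if_neg hxy]
      split_ifs <;> norm_num <;> omega
  rw [Finset.sum_congr rfl fun x _ => Finset.sum_congr rfl fun y _ => h2 x y]
  have hdiag : ∀ x : Vt m, ∑ y : Vt m, (if x = y then (1 : ℚ) else 0) = 1 := by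
    intro x; simp
  have hinner : ∀ x : Vt m,
      (∑ y : Vt m, ((1 - (if x = y then (1 : ℚ) else 0))
        + ((if (x.1.1 : ℕ) = m then (1 : ℚ) else 0) * (if (y.1.1 : ℕ) = m then (1 : ℚ) else 0)
            - (if x = y then (1 : ℚ) else 0) * (if (x.1.1 : ℕ) = m then (1 : ℚ) else 0))
        + ((if (x.1.2 : ℕ) = m then (1 : ℚ) else 0) * (if (y.1.2 : ℕ) = m then (1 : ℚ) else 0)
            - (if x = y then (1 : ℚ) else 0) * (if (x.1.2 : ℕ) = m then (1 : ℚ) else 0))))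
      = (((m : ℚ) ^ 2 + 2 * m - 1) - 1)
        + ((if (x.1.1 : ℕ) = m then (1 : ℚ) else 0) * m
            - (if (x.1.1 : ℕ) = m then (1 : ℚ) else 0))
        + ((if (x.1.2 : ℕ) = m then (1 : ℚ) else 0) * m
            - (if (x.1.2 : ℕ) = m then (1 : ℚ) else 0)) := by
    intro x
    simp only [Finset.sum_add_distrib, Finset.sum_sub_distrib, ← Finset.mul_sum,
      ← Finset.sum_mul]
    rw [Nq hm, alphaq hm, betaq hm, hdiag x]
    ring
  rw [Finset.sum_congr rfl fun x _ => hinner x]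
  simp only [Finset.sum_add_distrib, Finset.sum_sub_distrib, ← Finset.sum_mul,
    Finset.sum_const, Finset.card_univ, nsmul_eq_mul]
  rw [alphaq hm, betaq hm]
  have hcard : ((Fintype.card (Vt m) : ℚ)) = (m : ℚ) ^ 2 + 2 * m - 1 := by
    have hc := Nq (m := m) hm
    rw [Finset.sum_const, Finset.card_univ, nsmul_eq_mul, mul_one] at hc
    exact hc
  rw [hcard]
  ring

end Final

end EssAux

/-- For `n = pᵐqᵐ` with `p ≠ q` primes and `m > 1`, the Wiener index of the essential
ideal graph of `ZMod n` equals `(m⁴ + 4m³ + 3m² - 8m + 2)/2`. -/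
theorem wiener_essentialIdealGraph_pmqm (p q m n : ℕ)
    (hp : p.Prime) (hq : q.Prime) (hpq : p ≠ q) (hm : 1 < m)
    (hn : n = p ^ m * q ^ m) [NeZero n] :
    essWiener n =
      ((m : ℚ) ^ 4 + 4 * (m : ℚ) ^ 3 + 3 * (m : ℚ) ^ 2 - 8 * (m : ℚ) + 2) / 2 := by
  show (∑ u : EssVert n, ∑ v : EssVert n,
    ((essentialIdealGraph (ZMod n)).dist u v : ℚ)) / 2 = _
  rw [EssAux.ess_sum hp hq hpq hm hn]
  ring
end
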